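/- arXiv:1110.2563 — 10 statements merged into one kernel-verified Lean document; each statement's English description precedes it below -/
import Mathlib

section
/- Let X be an n×p real matrix with columns x_1,…,x_p, let β ∈ ℝ^p, ε ∈ ℝ^n and y = Xβ + ε. Fix j ∈ {1,…,p} and a vector z_j ∈ ℝ^n with z_j^T x_j ≠ 0, and given any vector β̂^{(init)} ∈ ℝ^p define the low-dimensional projection estimator β̂_j = z_j^T y/(z_j^T x_j) − Σ_{k≠j} (z_j^T x_k) β̂_k^{(init)}/(z_j^T x_j). Then |β̂_j − β_j − z_j^T ε/(z_j^T x_j)| ≤ (max_{k≠j} |z_j^T x_k| / |z_j^T x_j|) · ‖β̂^{(init)} − β‖₁. -/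
/-! Substituting `y = Xβ + ε` into the estimator, the `j`-th term of `z_jᵀ X β` cancels against
`β_j` after division by `z_jᵀ x_j`, and the error left over is
`Σ_{k≠j} (z_jᵀ x_k)(β_k − β̂_k^{(init)}) / (z_jᵀ x_j)`. Hölder's inequality (`ℓ∞` against `ℓ1`)
bounds this numerator by `max_{k≠j} |z_jᵀ x_k| · ‖β̂^{(init)} − β‖₁`. -/

open Finset

theorem sum_mul_sum_mul_comm {ι κ R : Type*} [Fintype ι] [Fintype κ]
    [CommSemiring R] (z : ι → R) (X : Matrix ι κ R) (b : κ → R) :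
    ∑ i, z i * ∑ k, X i k * b k = ∑ k, (∑ i, z i * X i k) * b k := by
  simp only [mul_sum, sum_mul, mul_assoc]
  exact sum_comm

theorem sum_add_div_sub_sum_erase_div_sub_eq {κ K : Type*} [Fintype κ] [DecidableEq κ] [Field K]
    {a : κ → K} {j : κ} (hj : a j ≠ 0) (b b' : κ → K) (e : K) :
    (∑ k, a k * b k + e) / a j - (∑ k ∈ univ.erase j, a k * b' k) / a j - b j - e / a j
      = (∑ k ∈ univ.erase j, a k * (b k - b' k)) / a j := by
  rw [← add_sum_erase _ _ (mem_univ j)]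
  field_simp
  simp only [mul_sub, sum_sub_distrib]
  ring

theorem abs_sum_mul_le_sup'_mul_sum_abs {ι R : Type*} [CommRing R] [LinearOrder R]
    [IsStrictOrderedRing R] (s : Finset ι) (hs : s.Nonempty) (a d : ι → R) :
    |∑ k ∈ s, a k * d k| ≤ s.sup' hs (fun k => |a k|) * ∑ k ∈ s, |d k| := by
  calc |∑ k ∈ s, a k * d k|
      ≤ ∑ k ∈ s, |a k| * |d k| := by
        simpa only [abs_mul] using abs_sum_le_sum_abs (fun k => a k * d k) s
    _ ≤ ∑ k ∈ s, s.sup' hs (fun k => |a k|) * |d k| := by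
        gcongr with k hk
        exact le_sup' (fun k => |a k|) hk
    _ = s.sup' hs (fun k => |a k|) * ∑ k ∈ s, |d k| := (mul_sum _ _ _).symm

/-- deterministic error decomposition bound for the LDPE. -/
theorem ldpe_bias_bound (n p : ℕ) (X : Matrix (Fin n) (Fin p) ℝ)
    (β βinit : Fin p → ℝ) (ε : Fin n → ℝ) (j : Fin p)
    (z : Fin n → ℝ)
    (y : Fin n → ℝ) (hy : y = fun i => (∑ k, X i k * β k) + ε i)
    (hzx : (∑ i, z i * X i j) ≠ 0)
    (hne : (Finset.univ.erase j).Nonempty)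
    (βhatj : ℝ)
    (hβhatj : βhatj = (∑ i, z i * y i) / (∑ i, z i * X i j)
      - (∑ k ∈ Finset.univ.erase j, (∑ i, z i * X i k) * βinit k) / (∑ i, z i * X i j)) :
    |βhatj - β j - (∑ i, z i * ε i) / (∑ i, z i * X i j)| ≤
      ((Finset.univ.erase j).sup' hne (fun k => |∑ i, z i * X i k|)) / |∑ i, z i * X i j|
        * ∑ k, |βinit k - β k| := by
  have hzy : ∑ i, z i * y i = ∑ k, (∑ i, z i * X i k) * β k + ∑ i, z i * ε i := by
    simp only [hy, mul_add, sum_add_distrib, sum_mul_sum_mul_comm]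
  rw [hβhatj, hzy, sum_add_div_sub_sum_erase_div_sub_eq (a := fun k => ∑ i, z i * X i k) hzx,
    abs_div, div_mul_eq_mul_div]
  have hsup_nonneg : 0 ≤ (univ.erase j).sup' hne (fun k => |∑ i, z i * X i k|) :=
    (abs_nonneg _).trans (le_sup' (fun k => |∑ i, z i * X i k|) hne.choose_spec)
  gcongr
  calc |∑ k ∈ univ.erase j, (∑ i, z i * X i k) * (β k - βinit k)|
      ≤ (univ.erase j).sup' hne (fun k => |∑ i, z i * X i k|)
          * ∑ k ∈ univ.erase j, |β k - βinit k| := abs_sum_mul_le_sup'_mul_sum_abs _ hne _ _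
    _ ≤ (univ.erase j).sup' hne (fun k => |∑ i, z i * X i k|) * ∑ k, |βinit k - β k| := by
        simp only [abs_sub_comm (β _)]
        gcongr
        exact subset_univ _
end

section
/- Let (Ω, P) be a probability space, σ > 0, and ε : Ω → ℝ a random variable with law N(0, σ²). Let μ ∈ ℝ and z = μ + ε. Let ẑ, t̂ : Ω → ℝ be random variables, Ω₀ a measurable event, and t > 0, Δ constants with 0 ≤ Δ ≤ t, such that on Ω₀ one has |ẑ − z| + |t̂ − t| ≤ Δ and t̂ > t + |ẑ − z|. Let s_u(x) = sgn(x)(|x| − u)₊ be the soft-threshold map. Then E[(s_{t̂}(ẑ) − μ)² 1_{Ω₀}] ≤ min{ 2E(ε − t)₊² + μ², σ² + (t + Δ)² } + Δ( 2E(ε − t)₊ + 3Δ P(ε > t) ), and this in turn is at most min{ μ², σ² + (t + Δ)² } + φ(t/σ)( 4σ⁵/t³ + 2Δσ³/t² + 3Δ²σ/t ), where φ(x) = e^{−x²/2}/√(2π). -/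
/-!
On `Ω₀` write `ẑ = μ + ε + e` and `t̂ = t + d`, so that `|e| < d` and `|e| + d ≤ Δ`. On each of
the three branches of the soft-threshold map the error `s_{t̂}(ẑ) - μ` is `-μ`, `ε - t - (d - e)`
or `ε + t + (d + e)`, which gives two pointwise bounds: `μ² + T(ε) + T(-ε)` with
`T(x) = (x - t)₊² + Δ² 1{x > t}`, and, for `μ ≥ 0` (reflect `ε` otherwise),
`(ε - t - Δ)² + 2Δ(ε - t)₊`. Integrating them against the symmetric law of `ε` gives the first
inequality. For the second, Gaussian integration by parts on `(t, ∞)` yields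
`t P(ε > t) ≤ σ² p(t)` and `t E(ε - t)₊^{k+1} ≤ (k + 1) σ² E(ε - t)₊^k`, where `p` is the density of
`ε` and `σ² p(t) = σ φ(t/σ)`.
-/

open MeasureTheory ProbabilityTheory

/-- The soft-threshold map `s_u(x) = sgn(x)(|x| - u)₊`. -/
noncomputable def softThreshold (u x : ℝ) : ℝ := Real.sign x * max (|x| - u) 0

/-- The standard normal density `φ(x) = e^{-x²/2}/√(2π)`. -/
noncomputable def stdNormalPdf (x : ℝ) : ℝ := Real.exp (-x ^ 2 / 2) / Real.sqrt (2 * Real.pi)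

open Set
open scoped NNReal

section SoftThreshold

variable {u y : ℝ}

lemma softThreshold_neg (u y : ℝ) : softThreshold u (-y) = -softThreshold u y := by
  simp [softThreshold, Real.sign_neg]

lemma softThreshold_eq_zero_of_abs_le (h : |y| ≤ u) : softThreshold u y = 0 := by
  simp [softThreshold, max_eq_right (sub_nonpos.mpr h)]

lemma softThreshold_eq_sub_of_lt (hu : 0 ≤ u) (h : u < y) : softThreshold u y = y - u := by
  have hy : 0 < y := hu.trans_lt h
  rw [softThreshold, Real.sign_of_pos hy, abs_of_pos hy, max_eq_left (by linarith), one_mul]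

lemma softThreshold_eq_add_of_lt_neg (hu : 0 ≤ u) (h : y < -u) : softThreshold u y = y + u := by
  have hy : y < 0 := h.trans_le (neg_nonpos.mpr hu)
  rw [softThreshold, Real.sign_of_neg hy, abs_of_neg hy, max_eq_left (by linarith)]
  ring

end SoftThreshold

section PointwiseBounds

variable {μ x y u t Δ : ℝ}

lemma sq_softThreshold_sub_le_tails (ht : 0 ≤ t) (hbound : |y - (μ + x)| + |u - t| ≤ Δ)
    (hthr : t + |y - (μ + x)| < u) :
    (softThreshold u y - μ) ^ 2 ≤
      μ ^ 2 + ((max (x - t) 0) ^ 2 + Δ ^ 2 * (Ioi t).indicator 1 x)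
        + ((max (-x - t) 0) ^ 2 + Δ ^ 2 * (Ioi t).indicator 1 (-x)) := by
  have he := abs_le.mp (le_refl |y - (μ + x)|)
  have hd : |u - t| = u - t := abs_of_pos (by linarith [abs_nonneg (y - (μ + x))])
  have hT : ∀ z, 0 ≤ (max (z - t) 0) ^ 2 + Δ ^ 2 * (Ioi t).indicator 1 z := fun z =>
    add_nonneg (sq_nonneg _) (mul_nonneg (sq_nonneg Δ) (indicator_nonneg (by simp) z))
  rcases le_or_gt |y| u with hy | hy
  · rw [softThreshold_eq_zero_of_abs_le hy]
    nlinarith [hT x, hT (-x)]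
  rcases lt_abs.mp hy with hy | hy
  · rw [softThreshold_eq_sub_of_lt (by linarith) hy]
    by_cases hx : t < x
    · rw [max_eq_left (by linarith), indicator_of_mem (show x ∈ Ioi t from hx), Pi.one_apply]
      nlinarith [hT (-x)]
    · nlinarith [hT x, hT (-x)]
  · rw [softThreshold_eq_add_of_lt_neg (by linarith) (by linarith)]
    by_cases hx : t < -x
    · rw [max_eq_left (show 0 ≤ -x - t by linarith),
        indicator_of_mem (show -x ∈ Ioi t from hx), Pi.one_apply]
      nlinarith [hT x]
    · nlinarith [hT x, hT (-x)]

lemma sq_softThreshold_sub_le_of_nonneg (ht : 0 ≤ t) (hμ : 0 ≤ μ)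
    (hbound : |y - (μ + x)| + |u - t| ≤ Δ) (hthr : t + |y - (μ + x)| < u) :
    (softThreshold u y - μ) ^ 2 ≤ (x - (t + Δ)) ^ 2 + 2 * Δ * max (x - t) 0 := by
  have he := abs_le.mp (le_refl |y - (μ + x)|)
  have hd : |u - t| = u - t := abs_of_pos (by linarith [abs_nonneg (y - (μ + x))])
  have hm := le_max_left (x - t) 0
  have hm0 := le_max_right (x - t) 0
  rcases le_or_gt |y| u with hy | hy
  · rw [softThreshold_eq_zero_of_abs_le hy]
    have := (abs_le.mp hy).2
    nlinarith
  rcases lt_abs.mp hy with hy | hy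
  · rw [softThreshold_eq_sub_of_lt (by linarith) hy]
    nlinarith
  · rw [softThreshold_eq_add_of_lt_neg (by linarith) (by linarith)]
    nlinarith

lemma sq_softThreshold_sub_le_of_nonpos (ht : 0 ≤ t) (hμ : μ ≤ 0)
    (hbound : |y - (μ + x)| + |u - t| ≤ Δ) (hthr : t + |y - (μ + x)| < u) :
    (softThreshold u y - μ) ^ 2 ≤ (-x - (t + Δ)) ^ 2 + 2 * Δ * max (-x - t) 0 := by
  have he : |-y - (-μ + -x)| = |y - (μ + x)| := by rw [← abs_neg]; ring_nf
  have h := sq_softThreshold_sub_le_of_nonneg (y := -y) ht (neg_nonneg.mpr hμ)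
    (he ▸ hbound) (he ▸ hthr)
  rwa [softThreshold_neg, show -softThreshold u y - -μ = -(softThreshold u y - μ) by ring,
    neg_sq] at h

end PointwiseBounds

lemma integrable_pow_of_memLp {α : Type*} [MeasurableSpace α] {μ : Measure α} [IsFiniteMeasure μ]
    {f : α → ℝ} {k : ℕ} (hf : MemLp f k μ) : Integrable (fun x => f x ^ k) μ :=
  hf.integrable_norm_pow'.mono' (hf.1.pow k) (ae_of_all _ fun x => by simp)

section Gaussian

variable {m : ℝ} {v : ℝ≥0}

instance isNegInvariant_gaussianReal_zero (v : ℝ≥0) : (gaussianReal 0 v).IsNegInvariant :=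
  ⟨by simpa [Measure.neg_def] using gaussianReal_map_neg (μ := 0) (v := v)⟩

lemma hasDerivAt_gaussianPDFReal (x : ℝ) :
    HasDerivAt (gaussianPDFReal m v) (-((x - m) / v) * gaussianPDFReal m v x) x := by
  have h : HasDerivAt (fun y : ℝ => -(y - m) ^ 2 / (2 * v)) (-(2 * (x - m)) / (2 * v)) x := by
    simpa using (((hasDerivAt_id x).sub_const m).fun_pow 2).neg.div_const (2 * (v : ℝ))
  refine (h.exp.const_mul (Real.sqrt (2 * Real.pi * v))⁻¹).congr_deriv ?_
  rw [gaussianPDFReal]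
  ring

lemma integrable_mul_gaussianPDFReal (hv : v ≠ 0) {f : ℝ → ℝ}
    (hf : Integrable f (gaussianReal m v)) :
    Integrable (fun x => f x * gaussianPDFReal m v x) := by
  rw [gaussianReal_of_var_ne_zero _ hv, integrable_withDensity_iff_integrable_smul'
    (measurable_gaussianPDF m v) (ae_of_all _ fun _ => gaussianPDF_lt_top)] at hf
  simpa [toReal_gaussianPDF, mul_comm] using hf

lemma integrable_sub_pow_gaussianReal (a : ℝ) (k : ℕ) :
    Integrable (fun x => (x - a) ^ k) (gaussianReal m v) :=
  integrable_pow_of_memLp ((memLp_id_gaussianReal k).sub (memLp_const a))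

lemma integrable_max_sub_pow_gaussianReal (a : ℝ) (k : ℕ) :
    Integrable (fun x => (max (x - a) 0) ^ k) (gaussianReal m v) :=
  integrable_pow_of_memLp ((memLp_id_gaussianReal k).sub (memLp_const a)).pos_part

lemma integral_sub_sq_gaussianReal (c : ℝ) :
    ∫ x, (x - c) ^ 2 ∂gaussianReal m v = v + (m - c) ^ 2 := by
  have hX : MemLp (fun x : ℝ => x - c) 2 (gaussianReal m v) :=
    (memLp_id_gaussianReal 2).sub (memLp_const c)
  have hvar : Var[fun x : ℝ => x - c; gaussianReal m v] = v := by
    rw [variance_sub_const (X := fun x => x) (by fun_prop), variance_fun_id_gaussianReal]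
  have hmean : ∫ x, (x - c) ∂gaussianReal m v = m - c := by
    have hid : Integrable (fun x : ℝ => x) (gaussianReal m v) :=
      (memLp_id_gaussianReal 1).integrable (by simp)
    rw [integral_sub hid (integrable_const c)]
    simp
  have := variance_eq_sub hX
  rw [hvar, hmean] at this
  simp only [Pi.pow_apply] at this
  linarith

end Gaussian

section HalfLine

variable {v : ℝ≥0} {a : ℝ}

lemma mul_setIntegral_Ioi_le {μ : Measure ℝ} {g : ℝ → ℝ} (hg : ∀ x ∈ Ioi a, 0 ≤ g x)
    (hgi : IntegrableOn g (Ioi a) μ) (hxg : IntegrableOn (fun x => x * g x) (Ioi a) μ) :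
    a * ∫ x in Ioi a, g x ∂μ ≤ ∫ x in Ioi a, x * g x ∂μ := by
  rw [← integral_const_mul]
  exact setIntegral_mono_on (hgi.const_mul a) hxg measurableSet_Ioi
    fun x hx => mul_le_mul_of_nonneg_right (le_of_lt hx) (hg x hx)

lemma integrable_sub_pow_mul_gaussianPDFReal (hv : v ≠ 0) (a : ℝ) (k : ℕ) :
    Integrable (fun x => (x - a) ^ k * gaussianPDFReal 0 v x) :=
  integrable_mul_gaussianPDFReal hv (integrable_sub_pow_gaussianReal a k)

lemma integrable_mul_sub_pow_mul_gaussianPDFReal (hv : v ≠ 0) (a : ℝ) (k : ℕ) :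
    Integrable (fun x => x * (x - a) ^ k * gaussianPDFReal 0 v x) := by
  refine ((integrable_sub_pow_mul_gaussianPDFReal hv a (k + 1)).add
    ((integrable_sub_pow_mul_gaussianPDFReal hv a k).const_mul a)).congr (ae_of_all _ fun x => ?_)
  simp only [Pi.add_apply]
  ring

/-- Gaussian integration by parts on a half-line. -/
theorem setIntegral_Ioi_mul_mul_gaussianPDFReal (hv : v ≠ 0) {f f' : ℝ → ℝ}
    (hf : ∀ x ∈ Ici a, HasDerivAt f (f' x) x)
    (hfp : IntegrableOn (fun x => f x * gaussianPDFReal 0 v x) (Ioi a))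
    (hxfp : IntegrableOn (fun x => x * f x * gaussianPDFReal 0 v x) (Ioi a))
    (hf'p : IntegrableOn (fun x => f' x * gaussianPDFReal 0 v x) (Ioi a)) :
    ∫ x in Ioi a, x * f x * gaussianPDFReal 0 v x =
      v * (f a * gaussianPDFReal 0 v a + ∫ x in Ioi a, f' x * gaussianPDFReal 0 v x) := by
  have hv' : (v : ℝ) ≠ 0 := by exact_mod_cast hv
  have hF : ∀ x ∈ Ici a, HasDerivAt (fun y => f y * gaussianPDFReal 0 v y)
      (f' x * gaussianPDFReal 0 v x - (v : ℝ)⁻¹ * (x * f x * gaussianPDFReal 0 v x)) x :=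
    fun x hx => ((hf x hx).mul (hasDerivAt_gaussianPDFReal x)).congr_deriv (by ring)
  have hF' := hf'p.sub (hxfp.const_mul (v : ℝ)⁻¹)
  have hlim := tendsto_zero_of_hasDerivAt_of_integrableOn_Ioi
    (fun x hx => hF x (Ioi_subset_Ici_self hx)) hF' hfp
  have h := integral_Ioi_of_hasDerivAt_of_tendsto' hF hF' hlim
  rw [integral_sub hf'p (hxfp.const_mul _), integral_const_mul] at h
  field_simp at h
  linarith

lemma setIntegral_Ioi_mul_gaussianPDFReal (hv : v ≠ 0) (a : ℝ) :
    ∫ x in Ioi a, x * gaussianPDFReal 0 v x = v * gaussianPDFReal 0 v a := by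
  simpa using setIntegral_Ioi_mul_mul_gaussianPDFReal hv (f := fun _ => 1) (f' := fun _ => 0)
    (fun x _ => hasDerivAt_const x 1) (by simpa using (integrable_gaussianPDFReal 0 v).integrableOn)
    (by simpa using (integrable_mul_sub_pow_mul_gaussianPDFReal hv a 0).integrableOn)
    (by simp)

lemma setIntegral_Ioi_mul_sub_pow_succ_mul_gaussianPDFReal (hv : v ≠ 0) (a : ℝ) (k : ℕ) :
    ∫ x in Ioi a, x * (x - a) ^ (k + 1) * gaussianPDFReal 0 v x =
      v * ((k + 1) * ∫ x in Ioi a, (x - a) ^ k * gaussianPDFReal 0 v x) := by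
  have hf : ∀ x ∈ Ici a, HasDerivAt (fun y => (y - a) ^ (k + 1)) ((k + 1) * (x - a) ^ k) x :=
    fun x _ => by simpa using ((hasDerivAt_id x).sub_const a).fun_pow (k + 1)
  rw [setIntegral_Ioi_mul_mul_gaussianPDFReal hv hf
    (integrable_sub_pow_mul_gaussianPDFReal hv a (k + 1)).integrableOn
    (integrable_mul_sub_pow_mul_gaussianPDFReal hv a (k + 1)).integrableOn
    (((integrable_sub_pow_mul_gaussianPDFReal hv a k).const_mul (k + 1)).integrableOn.congr_fun
      (fun x _ => by ring) measurableSet_Ioi)]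
  simp_rw [mul_assoc, integral_const_mul]
  simp

lemma setIntegral_Ioi_gaussianPDFReal_le (hv : v ≠ 0) (ha : 0 < a) :
    ∫ x in Ioi a, gaussianPDFReal 0 v x ≤ v * gaussianPDFReal 0 v a / a := by
  rw [le_div_iff₀ ha, mul_comm, ← setIntegral_Ioi_mul_gaussianPDFReal hv a]
  exact mul_setIntegral_Ioi_le (fun x _ => gaussianPDFReal_nonneg 0 v x)
    (integrable_gaussianPDFReal 0 v).integrableOn
    (by simpa using (integrable_mul_sub_pow_mul_gaussianPDFReal hv a 0).integrableOn)

lemma setIntegral_Ioi_sub_pow_succ_mul_gaussianPDFReal_le (hv : v ≠ 0) (ha : 0 < a) (k : ℕ) :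
    ∫ x in Ioi a, (x - a) ^ (k + 1) * gaussianPDFReal 0 v x ≤
      (k + 1) * v / a * ∫ x in Ioi a, (x - a) ^ k * gaussianPDFReal 0 v x := by
  have h := mul_setIntegral_Ioi_le (a := a)
    (fun x hx => mul_nonneg (pow_nonneg (sub_nonneg.mpr (le_of_lt hx)) _)
      (gaussianPDFReal_nonneg 0 v x))
    (integrable_sub_pow_mul_gaussianPDFReal hv a (k + 1)).integrableOn
    (by simpa only [mul_assoc] using
      (integrable_mul_sub_pow_mul_gaussianPDFReal hv a (k + 1)).integrableOn)
  simp_rw [← mul_assoc] at h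
  rw [setIntegral_Ioi_mul_sub_pow_succ_mul_gaussianPDFReal hv] at h
  rw [div_mul_eq_mul_div, le_div_iff₀ ha]
  linarith

end HalfLine

section Tails

variable {v : ℝ≥0} {t : ℝ}

lemma integral_max_sub_pow_gaussianReal (hv : v ≠ 0) (a : ℝ) {k : ℕ} (hk : k ≠ 0) :
    ∫ x, (max (x - a) 0) ^ k ∂gaussianReal 0 v =
      ∫ x in Ioi a, (x - a) ^ k * gaussianPDFReal 0 v x := by
  rw [integral_gaussianReal_eq_integral_smul hv, ← integral_indicator measurableSet_Ioi]
  congr 1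
  ext x
  by_cases hx : a < x
  · simp [hx, max_eq_left (sub_nonneg.mpr hx.le), mul_comm]
  · simp [hx, max_eq_right (sub_nonpos.mpr (not_lt.mp hx)), hk]

lemma measureReal_Ioi_gaussianReal (hv : v ≠ 0) (a : ℝ) :
    (gaussianReal 0 v).real (Ioi a) = ∫ x in Ioi a, gaussianPDFReal 0 v x := by
  rw [measureReal_def, gaussianReal_apply_eq_integral _ hv, ENNReal.toReal_ofReal
    (setIntegral_nonneg measurableSet_Ioi fun x _ => gaussianPDFReal_nonneg 0 v x)]

lemma measureReal_Ioi_gaussianReal_le (hv : v ≠ 0) (ht : 0 < t) :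
    (gaussianReal 0 v).real (Ioi t) ≤ v * gaussianPDFReal 0 v t / t := by
  rw [measureReal_Ioi_gaussianReal hv]
  exact setIntegral_Ioi_gaussianPDFReal_le hv ht

lemma integral_max_sub_gaussianReal_le (hv : v ≠ 0) (ht : 0 < t) :
    ∫ x, max (x - t) 0 ∂gaussianReal 0 v ≤ v * (v * gaussianPDFReal 0 v t) / t ^ 2 := by
  have h := setIntegral_Ioi_sub_pow_succ_mul_gaussianPDFReal_le hv ht 0
  simp only [zero_add, pow_one, pow_zero, one_mul, Nat.cast_zero] at h
  have hmax := integral_max_sub_pow_gaussianReal hv t one_ne_zero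
  simp only [pow_one] at hmax
  rw [hmax]
  calc _ ≤ v / t * (v * gaussianPDFReal 0 v t / t) :=
        h.trans (by gcongr; exact setIntegral_Ioi_gaussianPDFReal_le hv ht)
    _ = v * (v * gaussianPDFReal 0 v t) / t ^ 2 := by ring

lemma integral_max_sub_sq_gaussianReal_le (hv : v ≠ 0) (ht : 0 < t) :
    ∫ x, (max (x - t) 0) ^ 2 ∂gaussianReal 0 v ≤
      2 * v ^ 2 * (v * gaussianPDFReal 0 v t) / t ^ 3 := by
  have h := setIntegral_Ioi_sub_pow_succ_mul_gaussianPDFReal_le hv ht 1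
  have hE := integral_max_sub_gaussianReal_le hv ht
  rw [← integral_max_sub_pow_gaussianReal hv t one_ne_zero] at h
  simp only [pow_one, Nat.cast_one, one_add_one_eq_two] at h
  rw [integral_max_sub_pow_gaussianReal hv t two_ne_zero]
  calc _ ≤ 2 * v / t * (v * (v * gaussianPDFReal 0 v t) / t ^ 2) := h.trans (by gcongr)
    _ = 2 * v ^ 2 * (v * gaussianPDFReal 0 v t) / t ^ 3 := by ring

lemma mul_gaussianPDFReal_eq_stdNormalPdf {σ : ℝ} (hσ : 0 < σ) (hvσ : (v : ℝ) = σ ^ 2)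
    (x : ℝ) : v * gaussianPDFReal 0 v x = σ * stdNormalPdf (x / σ) := by
  have hsqrt : Real.sqrt (2 * Real.pi * σ ^ 2) = Real.sqrt (2 * Real.pi) * σ := by
    rw [Real.sqrt_mul (by positivity), Real.sqrt_sq hσ.le]
  rw [gaussianPDFReal, stdNormalPdf, hvσ, hsqrt, sub_zero, div_pow]
  field_simp

lemma min_add_gaussianReal_tails_le {σ μ Δ : ℝ} (B : ℝ) (hσ : 0 < σ) (hvσ : (v : ℝ) = σ ^ 2)
    (ht : 0 < t) (hΔ : 0 ≤ Δ) :
    min (2 * ∫ x, (max (x - t) 0) ^ 2 ∂gaussianReal 0 v + μ ^ 2) B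
        + Δ * (2 * ∫ x, max (x - t) 0 ∂gaussianReal 0 v + 3 * Δ * (gaussianReal 0 v).real (Ioi t))
      ≤ min (μ ^ 2) B + stdNormalPdf (t / σ) *
          (4 * σ ^ 5 / t ^ 3 + 2 * Δ * σ ^ 3 / t ^ 2 + 3 * Δ ^ 2 * σ / t) := by
  have hv : v ≠ 0 := by rw [← NNReal.coe_ne_zero, hvσ]; positivity
  have hQ := measureReal_Ioi_gaussianReal_le hv ht
  have hE1 := integral_max_sub_gaussianReal_le hv ht
  have hE2 := integral_max_sub_sq_gaussianReal_le hv ht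
  have hE2nn : 0 ≤ ∫ x, (max (x - t) 0) ^ 2 ∂gaussianReal 0 v :=
    integral_nonneg fun x => sq_nonneg _
  rw [mul_gaussianPDFReal_eq_stdNormalPdf hσ hvσ] at hQ hE1 hE2
  rw [hvσ] at hE1 hE2
  set φ := stdNormalPdf (t / σ)
  set E1 := ∫ x, max (x - t) 0 ∂gaussianReal 0 v
  set E2 := ∫ x, (max (x - t) 0) ^ 2 ∂gaussianReal 0 v
  set Q := (gaussianReal 0 v).real (Ioi t)
  have hmin : min (2 * E2 + μ ^ 2) B ≤ min (μ ^ 2) B + 2 * E2 := by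
    rw [← min_add_add_right]
    exact min_le_min (by linarith) (by linarith)
  calc min (2 * E2 + μ ^ 2) B + Δ * (2 * E1 + 3 * Δ * Q)
      = min (2 * E2 + μ ^ 2) B + 2 * (Δ * E1) + 3 * (Δ * Δ * Q) := by ring
    _ ≤ min (μ ^ 2) B + 2 * (2 * (σ ^ 2) ^ 2 * (σ * φ) / t ^ 3)
          + 2 * (Δ * (σ ^ 2 * (σ * φ) / t ^ 2)) + 3 * (Δ * Δ * (σ * φ / t)) := by
        linarith [mul_le_mul_of_nonneg_left hE1 hΔ, mul_le_mul_of_nonneg_left hQ (mul_nonneg hΔ hΔ)]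
    _ = min (μ ^ 2) B + φ * (4 * σ ^ 5 / t ^ 3 + 2 * Δ * σ ^ 3 / t ^ 2 + 3 * Δ ^ 2 * σ / t) := by
        ring

end Tails

section Risk

variable {Ω α : Type*} [MeasurableSpace Ω] [MeasurableSpace α] {P : Measure Ω} {ν : Measure α}

lemma ProbabilityTheory.HasLaw.setIntegral_le_of_le_comp {X : Ω → α} (hX : HasLaw X ν P) {f : Ω → ℝ}
    {g : α → ℝ} {s : Set Ω} (hs : MeasurableSet s) (hg : Integrable g ν) (hg0 : 0 ≤ g)
    (hf0 : ∀ ω ∈ s, 0 ≤ f ω) (hfg : ∀ ω ∈ s, f ω ≤ g (X ω)) :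
    ∫ ω in s, f ω ∂P ≤ ∫ x, g x ∂ν := by
  have hgX : Integrable (fun ω => g (X ω)) P :=
    (hX.map_eq ▸ hg).comp_aemeasurable hX.aemeasurable
  calc ∫ ω in s, f ω ∂P ≤ ∫ ω in s, g (X ω) ∂P :=
        integral_mono_of_nonneg ((ae_restrict_iff' hs).mpr (ae_of_all _ hf0)) hgX.integrableOn
          ((ae_restrict_iff' hs).mpr (ae_of_all _ hfg))
    _ ≤ ∫ ω, g (X ω) ∂P := setIntegral_le_integral hgX (ae_of_all _ fun ω => hg0 _)
    _ = ∫ x, g x ∂ν := hX.integral_comp hg.aestronglyMeasurable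

variable {v : ℝ≥0} {ε zhat that : Ω → ℝ} {μ t Δ : ℝ} {s : Set Ω}

lemma setIntegral_sq_softThreshold_sub_le_tails (hX : HasLaw ε (gaussianReal 0 v) P)
    (hs : MeasurableSet s) (ht : 0 ≤ t)
    (hbound : ∀ ω ∈ s, |zhat ω - (μ + ε ω)| + |that ω - t| ≤ Δ)
    (hthr : ∀ ω ∈ s, t + |zhat ω - (μ + ε ω)| < that ω) :
    ∫ ω in s, (softThreshold (that ω) (zhat ω) - μ) ^ 2 ∂P ≤
      μ ^ 2 + 2 * (∫ x, (max (x - t) 0) ^ 2 ∂gaussianReal 0 v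
        + Δ ^ 2 * (gaussianReal 0 v).real (Ioi t)) := by
  set T : ℝ → ℝ := fun x => (max (x - t) 0) ^ 2 + Δ ^ 2 * (Ioi t).indicator 1 x
  have hT0 : 0 ≤ T := fun x =>
    add_nonneg (sq_nonneg _) (mul_nonneg (sq_nonneg Δ) (indicator_nonneg (by simp) x))
  have hI : Integrable ((Ioi t).indicator (1 : ℝ → ℝ)) (gaussianReal 0 v) :=
    (integrable_const (1 : ℝ)).indicator measurableSet_Ioi
  have hT : Integrable T (gaussianReal 0 v) :=
    (integrable_max_sub_pow_gaussianReal t 2).add (hI.const_mul _)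
  have hg := ((integrable_const (μ ^ 2)).add hT).add hT.comp_neg
  calc _ ≤ ∫ x, μ ^ 2 + T x + T (-x) ∂gaussianReal 0 v :=
        hX.setIntegral_le_of_le_comp hs hg
          (fun x => add_nonneg (add_nonneg (sq_nonneg μ) (hT0 x)) (hT0 (-x)))
          (fun _ _ => sq_nonneg _)
          (fun ω hω => sq_softThreshold_sub_le_tails ht (hbound ω hω) (hthr ω hω))
    _ = μ ^ 2 + 2 * ∫ x, T x ∂gaussianReal 0 v := by
        rw [integral_add (by fun_prop) hT.comp_neg, integral_add (by fun_prop) hT,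
          integral_neg_eq_self]
        simp
        ring
    _ = _ := by
        simp only [T]
        rw [integral_add (integrable_max_sub_pow_gaussianReal t 2) (hI.const_mul _),
          integral_const_mul, integral_indicator_one measurableSet_Ioi]

lemma setIntegral_sq_softThreshold_sub_le_shift (hX : HasLaw ε (gaussianReal 0 v) P)
    (hs : MeasurableSet s) (ht : 0 ≤ t) (hΔ : 0 ≤ Δ)
    (hbound : ∀ ω ∈ s, |zhat ω - (μ + ε ω)| + |that ω - t| ≤ Δ)
    (hthr : ∀ ω ∈ s, t + |zhat ω - (μ + ε ω)| < that ω) :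
    ∫ ω in s, (softThreshold (that ω) (zhat ω) - μ) ^ 2 ∂P ≤
      v + (t + Δ) ^ 2 + 2 * Δ * ∫ x, max (x - t) 0 ∂gaussianReal 0 v := by
  set g : ℝ → ℝ := fun x => (x - (t + Δ)) ^ 2 + 2 * Δ * max (x - t) 0
  have hg0 : 0 ≤ g := fun x => by positivity
  have hm : Integrable (fun x => max (x - t) 0) (gaussianReal 0 v) := by
    simpa using integrable_max_sub_pow_gaussianReal (m := 0) (v := v) t 1
  have hg : Integrable g (gaussianReal 0 v) :=
    (integrable_sub_pow_gaussianReal _ 2).add (hm.const_mul _)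
  have hint : ∫ x, g x ∂gaussianReal 0 v =
      v + (t + Δ) ^ 2 + 2 * Δ * ∫ x, max (x - t) 0 ∂gaussianReal 0 v := by
    rw [integral_add (integrable_sub_pow_gaussianReal _ 2) (hm.const_mul _),
      integral_sub_sq_gaussianReal, integral_const_mul]
    ring
  rw [← hint]
  rcases le_or_gt 0 μ with hμ | hμ
  · exact hX.setIntegral_le_of_le_comp hs hg hg0 (fun _ _ => sq_nonneg _)
      fun ω hω => sq_softThreshold_sub_le_of_nonneg ht hμ (hbound ω hω) (hthr ω hω)
  · rw [← integral_neg_eq_self g]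
    exact hX.setIntegral_le_of_le_comp hs hg.comp_neg (fun x => hg0 (-x))
      (fun _ _ => sq_nonneg _)
      fun ω hω => sq_softThreshold_sub_le_of_nonpos ht hμ.le (hbound ω hω) (hthr ω hω)

lemma setIntegral_sq_softThreshold_sub_le (hX : HasLaw ε (gaussianReal 0 v) P)
    (hs : MeasurableSet s) (ht : 0 ≤ t) (hΔ : 0 ≤ Δ)
    (hbound : ∀ ω ∈ s, |zhat ω - (μ + ε ω)| + |that ω - t| ≤ Δ)
    (hthr : ∀ ω ∈ s, t + |zhat ω - (μ + ε ω)| < that ω) :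
    ∫ ω in s, (softThreshold (that ω) (zhat ω) - μ) ^ 2 ∂P ≤
      min (2 * ∫ x, (max (x - t) 0) ^ 2 ∂gaussianReal 0 v + μ ^ 2) (v + (t + Δ) ^ 2)
        + Δ * (2 * ∫ x, max (x - t) 0 ∂gaussianReal 0 v
          + 3 * Δ * (gaussianReal 0 v).real (Ioi t)) := by
  have hA := setIntegral_sq_softThreshold_sub_le_tails hX hs ht hbound hthr
  have hB := setIntegral_sq_softThreshold_sub_le_shift hX hs ht hΔ hbound hthr
  have hE1 : 0 ≤ ∫ x, max (x - t) 0 ∂gaussianReal 0 v := integral_nonneg fun x => le_max_right _ _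
  have hQ : 0 ≤ (gaussianReal 0 v).real (Ioi t) := measureReal_nonneg
  rw [← min_add_add_right]
  exact le_min (by nlinarith) (by nlinarith)

end Risk

theorem perturbed_soft_threshold_risk_general
    {Ω : Type*} [MeasurableSpace Ω] (P : Measure Ω)
    (σ : ℝ) (hσ : 0 < σ) (ε : Ω → ℝ)
    (hlaw : P.map ε = gaussianReal 0 ⟨σ ^ 2, sq_nonneg σ⟩)
    (μ : ℝ) (z : Ω → ℝ) (hz : z = fun ω => μ + ε ω)
    (zhat that : Ω → ℝ)
    (Ω₀ : Set Ω) (hΩ₀ : MeasurableSet Ω₀)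
    (t Δ : ℝ) (ht : 0 < t) (hΔ0 : 0 ≤ Δ)
    (hbound : ∀ ω ∈ Ω₀, |zhat ω - z ω| + |that ω - t| ≤ Δ)
    (hthr : ∀ ω ∈ Ω₀, that ω > t + |zhat ω - z ω|) :
    (∫ ω in Ω₀, (softThreshold (that ω) (zhat ω) - μ) ^ 2 ∂P) ≤
      min (2 * (∫ ω, (max (ε ω - t) 0) ^ 2 ∂P) + μ ^ 2) (σ ^ 2 + (t + Δ) ^ 2)
        + Δ * (2 * (∫ ω, max (ε ω - t) 0 ∂P) + 3 * Δ * (P {ω | t < ε ω}).toReal) ∧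
    min (2 * (∫ ω, (max (ε ω - t) 0) ^ 2 ∂P) + μ ^ 2) (σ ^ 2 + (t + Δ) ^ 2)
        + Δ * (2 * (∫ ω, max (ε ω - t) 0 ∂P) + 3 * Δ * (P {ω | t < ε ω}).toReal) ≤
      min (μ ^ 2) (σ ^ 2 + (t + Δ) ^ 2)
        + stdNormalPdf (t / σ) *
          (4 * σ ^ 5 / t ^ 3 + 2 * Δ * σ ^ 3 / t ^ 2 + 3 * Δ ^ 2 * σ / t) := by
  set v : ℝ≥0 := ⟨σ ^ 2, sq_nonneg σ⟩
  have hX : HasLaw ε (gaussianReal 0 v) P :=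
    ⟨.of_map_ne_zero (hlaw ▸ IsProbabilityMeasure.ne_zero _), hlaw⟩
  have hE2 : ∫ ω, (max (ε ω - t) 0) ^ 2 ∂P = ∫ x, (max (x - t) 0) ^ 2 ∂gaussianReal 0 v :=
    hX.integral_comp (f := fun x => (max (x - t) 0) ^ 2) (by fun_prop)
  have hE1 : ∫ ω, max (ε ω - t) 0 ∂P = ∫ x, max (x - t) 0 ∂gaussianReal 0 v :=
    hX.integral_comp (f := fun x => max (x - t) 0) (by fun_prop)
  have hQ : P.real {ω | t < ε ω} = (gaussianReal 0 v).real (Set.Ioi t) :=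
    hX.measureReal_eq measurableSet_Ioi
  subst hz
  rw [hE2, hE1, ← measureReal_def, hQ]
  exact ⟨setIntegral_sq_softThreshold_sub_le hX hΩ₀ ht.le hΔ0 hbound hthr,
    min_add_gaussianReal_tails_le _ hσ rfl ht hΔ0⟩

/-- risk bound for a perturbed soft-threshold estimator (Lemma 1). -/
theorem perturbed_soft_threshold_risk
    {Ω : Type*} [MeasurableSpace Ω] (P : Measure Ω) [IsProbabilityMeasure P]
    (σ : ℝ) (hσ : 0 < σ) (ε : Ω → ℝ) (hε : Measurable ε)
    (hlaw : P.map ε = gaussianReal 0 ⟨σ ^ 2, sq_nonneg σ⟩)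
    (μ : ℝ) (z : Ω → ℝ) (hz : z = fun ω => μ + ε ω)
    (zhat that : Ω → ℝ) (hzhat : Measurable zhat) (hthat : Measurable that)
    (Ω₀ : Set Ω) (hΩ₀ : MeasurableSet Ω₀)
    (t Δ : ℝ) (ht : 0 < t) (hΔ0 : 0 ≤ Δ) (hΔt : Δ ≤ t)
    (hbound : ∀ ω ∈ Ω₀, |zhat ω - z ω| + |that ω - t| ≤ Δ)
    (hthr : ∀ ω ∈ Ω₀, that ω > t + |zhat ω - z ω|) :
    (∫ ω in Ω₀, (softThreshold (that ω) (zhat ω) - μ) ^ 2 ∂P) ≤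
      min (2 * (∫ ω, (max (ε ω - t) 0) ^ 2 ∂P) + μ ^ 2) (σ ^ 2 + (t + Δ) ^ 2)
        + Δ * (2 * (∫ ω, max (ε ω - t) 0 ∂P) + 3 * Δ * (P {ω | t < ε ω}).toReal) ∧
    min (2 * (∫ ω, (max (ε ω - t) 0) ^ 2 ∂P) + μ ^ 2) (σ ^ 2 + (t + Δ) ^ 2)
        + Δ * (2 * (∫ ω, max (ε ω - t) 0 ∂P) + 3 * Δ * (P {ω | t < ε ω}).toReal) ≤
      min (μ ^ 2) (σ ^ 2 + (t + Δ) ^ 2)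
        + stdNormalPdf (t / σ) *
          (4 * σ ^ 5 / t ^ 3 + 2 * Δ * σ ^ 3 / t ^ 2 + 3 * Δ ^ 2 * σ / t) :=
  perturbed_soft_threshold_risk_general P σ hσ ε hlaw μ z hz zhat that Ω₀ hΩ₀ t Δ ht hΔ0 hbound hthr
end

section
/- Let σ > 0, t > 0, and let ε be a real random variable with law N(0, σ²). Then for every integer k ≥ 1, E[((ε − t)₊)^k] ≤ k! · σ^{2k+1} · φ(t/σ) / t^{k+1}, where φ(x) = e^{−x²/2}/√(2π). -/
open MeasureTheory ProbabilityTheory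

/-!
Completing the square at `t` puts the density `p` of `N(μ, v)` below its exponential tangent:
`p x ≤ p t · exp (-((t - μ) / v) (x - t))` for all `x`, the ratio being `exp (-(x - t)² / 2v)`.
For `μ = 0`, `v = σ²` the excess moment is thus at most `p t` times the Gamma integral
`∫₀^∞ u ^ k e ^ (-t u / σ²) du = k! (σ² / t) ^ (k + 1)`, and `p t = φ (t / σ) / σ`.
-/

open Real Set
open scoped Nat

section PowMulExpNeg

variable {c : ℝ} {k : ℕ}

theorem integral_pow_mul_exp_neg_mul_Ioi (hc : 0 < c) :
    ∫ u in Ioi (0 : ℝ), u ^ k * exp (-(c * u)) = k ! / c ^ (k + 1) := by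
  have h := integral_rpow_mul_exp_neg_mul_Ioi (a := (k : ℝ) + 1) (by positivity) hc
  simp only [add_sub_cancel_right, rpow_natCast, Gamma_nat_eq_factorial] at h
  rw [h, one_div, inv_rpow hc.le, ← Nat.cast_succ, rpow_natCast, inv_mul_eq_div]

theorem integrableOn_pow_mul_exp_neg_mul_Ioi (hc : 0 < c) :
    IntegrableOn (fun u : ℝ => u ^ k * exp (-(c * u))) (Ioi 0) :=
  .of_integral_ne_zero (by rw [integral_pow_mul_exp_neg_mul_Ioi hc]; positivity)

theorem max_pow_mul_exp_neg_mul_eq_indicator (hk : k ≠ 0) (c : ℝ) :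
    (fun u : ℝ => max u 0 ^ k * exp (-(c * u))) =
      (Ioi 0).indicator (fun u => u ^ k * exp (-(c * u))) := by
  funext u
  rcases le_or_gt u 0 with hu | hu
  · simp [zero_pow hk, hu]
  · simp [max_eq_left hu.le, hu]

theorem integrable_max_pow_mul_exp_neg_mul (hk : k ≠ 0) (hc : 0 < c) :
    Integrable (fun u : ℝ => max u 0 ^ k * exp (-(c * u))) := by
  rw [max_pow_mul_exp_neg_mul_eq_indicator hk]
  exact (integrableOn_pow_mul_exp_neg_mul_Ioi hc).integrable_indicator measurableSet_Ioi

theorem integral_max_pow_mul_exp_neg_mul (hk : k ≠ 0) (hc : 0 < c) :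
    ∫ u : ℝ, max u 0 ^ k * exp (-(c * u)) = k ! / c ^ (k + 1) := by
  rw [max_pow_mul_exp_neg_mul_eq_indicator hk, integral_indicator measurableSet_Ioi,
    integral_pow_mul_exp_neg_mul_Ioi hc]

end PowMulExpNeg

theorem gaussianPDFReal_le_mul_exp (μ : ℝ) (v : NNReal) (t x : ℝ) :
    gaussianPDFReal μ v x ≤ gaussianPDFReal μ v t * exp (-((t - μ) / v * (x - t))) := by
  have hsq : -(x - μ) ^ 2 / (2 * v) =
      -(t - μ) ^ 2 / (2 * v) + -((t - μ) / v * (x - t)) - (x - t) ^ 2 / (2 * v) := by ring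
  simp only [gaussianPDFReal, mul_assoc, ← exp_add]
  gcongr
  rw [hsq, sub_le_self_iff]
  positivity

theorem gaussianPDFReal_eq_stdNormalPdf (μ : ℝ) (v : NNReal) (x : ℝ) :
    gaussianPDFReal μ v x = stdNormalPdf ((x - μ) / √v) / √v := by
  rw [gaussianPDFReal, stdNormalPdf, div_pow, sq_sqrt v.coe_nonneg, sqrt_mul (by positivity)]
  ring_nf

/-- moment bound for the positive excess of a centered Gaussian:
`E[((ε-t)₊)^k] ≤ k! σ^{2k+1} φ(t/σ) / t^{k+1}`. -/
theorem gaussian_excess_moment_bound (σ t : ℝ) (hσ : 0 < σ) (ht : 0 < t)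
    (k : ℕ) (hk : 1 ≤ k) :
    (∫ x, (max (x - t) 0) ^ k ∂(gaussianReal 0 ⟨σ ^ 2, sq_nonneg σ⟩)) ≤
      (Nat.factorial k : ℝ) * σ ^ (2 * k + 1) * stdNormalPdf (t / σ) / t ^ (k + 1) := by
  set v : NNReal := ⟨σ ^ 2, sq_nonneg σ⟩
  have hvσ : (v : ℝ) = σ ^ 2 := rfl
  have hv : v ≠ 0 := fun h => (pow_pos hσ 2).ne' (congrArg NNReal.toReal h)
  have hk0 : k ≠ 0 := by omega
  have hc : 0 < t / σ ^ 2 := by positivity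
  set g : ℝ → ℝ := fun u => max u 0 ^ k * exp (-(t / σ ^ 2 * u))
  calc (∫ x, max (x - t) 0 ^ k ∂(gaussianReal 0 v))
      = ∫ x, gaussianPDFReal 0 v x * max (x - t) 0 ^ k :=
        integral_gaussianReal_eq_integral_smul hv
    _ ≤ ∫ x, gaussianPDFReal 0 v t * g (x - t) := by
        refine integral_mono_of_nonneg
          (.of_forall fun x => mul_nonneg (gaussianPDFReal_nonneg 0 v x) (by positivity))
          (((integrable_max_pow_mul_exp_neg_mul hk0 hc).comp_sub_right t).const_mul _)
          (.of_forall fun x => ?_)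
        have h := gaussianPDFReal_le_mul_exp 0 v t x
        rw [sub_zero, hvσ] at h
        calc _ ≤ _ := mul_le_mul_of_nonneg_right h (by positivity)
          _ = _ := by simp only [g]; ring
    _ = gaussianPDFReal 0 v t * (k ! / (t / σ ^ 2) ^ (k + 1)) := by
        rw [integral_const_mul, integral_sub_right_eq_self g t,
          integral_max_pow_mul_exp_neg_mul hk0 hc]
    _ = _ := by
        rw [gaussianPDFReal_eq_stdNormalPdf, hvσ, sqrt_sq hσ.le, sub_zero]
        generalize stdNormalPdf (t / σ) = p
        rw [div_pow, ← pow_mul]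
        field_simp
        ring
end

section
/- For every integer n ≥ 2, (1/(2^{n/2} Γ(n/2))) ∫₀^{n/4} t^{n/2 − 1} e^{−t/2} dt ≤ (e/4)^{n/2} / √(2π). In other words, if χ²_n denotes a chi-square random variable with n degrees of freedom, then P(χ²_n < n/4) ≤ (e/4)^{n/2}/√(2π). -/
/-!
Dropping the factor `e^{-t/2} ≤ 1` bounds the integral by `∫₀^{n/4} t^{n/2-1} dt`, so with
`x = n/2` the left-hand side is at most `(x/4)^x / Γ(x+1)`. The claim then reduces to the
Stirling-type bound `√(2π) (x/e)^x ≤ Γ(x+1)` for real `x ≥ 1`, which follows from Stirling's bound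
for `⌊x⌋!` and the log-convexity of `Γ`.
-/

open Real

theorem Real.Gamma_add_le_Gamma_mul_rpow {x θ : ℝ} (hx : 0 < x) (hθ₀ : 0 ≤ θ) (hθ₁ : θ ≤ 1) :
    Gamma (x + θ) ≤ Gamma x * x ^ θ := by
  have hΓ := Gamma_pos_of_pos hx
  rcases hθ₀.eq_or_lt with rfl | hθ₀
  · simp
  rcases hθ₁.eq_or_lt with rfl | hθ₁
  · rw [Gamma_add_one hx.ne', rpow_one, mul_comm]
  calc Gamma (x + θ) = Gamma ((1 - θ) * x + θ * (x + 1)) := by ring_nf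
    _ ≤ Gamma x ^ (1 - θ) * Gamma (x + 1) ^ θ :=
      Gamma_mul_add_mul_le_rpow_Gamma_mul_rpow_Gamma hx (by linarith) (by linarith) hθ₀ (by ring)
    _ = Gamma x * x ^ θ := by
      rw [Gamma_add_one hx.ne', mul_rpow hx.le hΓ.le, mul_left_comm, ← rpow_add hΓ,
        sub_add_cancel, rpow_one, mul_comm]

open Nat in
theorem Real.factorial_mul_rpow_le_Gamma_add_one {x : ℝ} {k : ℕ} (hx : 0 < x) (hkx : k ≤ x)
    (hxk : x ≤ k + 1) : k ! * x ^ (x - k) ≤ Gamma (x + 1) := by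
  have hk := Gamma_add_le_Gamma_mul_rpow hx (sub_nonneg.2 hxk) (by linarith : (k:ℝ) + 1 - x ≤ 1)
  rw [add_sub_cancel, Gamma_nat_eq_factorial] at hk
  calc (k ! : ℝ) * x ^ (x - k) ≤ Gamma x * x ^ ((k:ℝ) + 1 - x) * x ^ (x - k) := by gcongr
    _ = Gamma (x + 1) := by
      rw [mul_assoc, ← rpow_add hx, Gamma_add_one hx.ne']
      ring_nf
      rw [rpow_one, mul_comm]

theorem Real.natCast_add_pow_le_pow_mul_exp (k : ℕ) {θ : ℝ} (hθ : 0 ≤ θ) :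
    ((k : ℝ) + θ) ^ k ≤ (k : ℝ) ^ k * exp θ := by
  rcases k.eq_zero_or_pos with rfl | hk
  · simpa using one_le_exp hθ
  have hk' : (0 : ℝ) < k := by exact_mod_cast hk
  calc ((k : ℝ) + θ) ^ k = (k : ℝ) ^ k * (θ / k + 1) ^ k := by
        rw [← mul_pow]; congr 1; field_simp; ring
    _ ≤ (k : ℝ) ^ k * exp (θ / k) ^ k := by gcongr; exact add_one_le_exp _
    _ = (k : ℝ) ^ k * exp θ := by rw [← exp_nat_mul]; field_simp

open Nat in
theorem Real.sqrt_two_mul_pi_mul_div_exp_rpow_le_Gamma_add_one {x : ℝ} (hx : 1 ≤ x) :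
    √(2 * π) * (x / exp 1) ^ x ≤ Gamma (x + 1) := by
  set k := ⌊x⌋₊
  set θ := x - k
  have hx0 : 0 < x := by linarith
  have hkx : (k : ℝ) ≤ x := Nat.floor_le hx0.le
  have hxk : x ≤ k + 1 := (Nat.lt_floor_add_one x).le
  have hk1 : (1 : ℝ) ≤ k := by
    exact_mod_cast Nat.le_floor (by exact_mod_cast hx : ((1 : ℕ) : ℝ) ≤ x)
  have hθ : 0 ≤ θ := sub_nonneg.2 hkx
  have hxkθ : x = k + θ := by ring
  calc √(2 * π) * (x / exp 1) ^ x = √(2 * π) * (x ^ k / exp k) * x ^ θ / exp θ := by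
        have hpow : x ^ x = x ^ k * x ^ θ := by
          rw [← rpow_natCast, ← rpow_add hx0, ← hxkθ]
        rw [div_rpow hx0.le (exp_pos 1).le, exp_one_rpow, hpow, hxkθ, exp_add, ← hxkθ]
        ring
    _ ≤ √(2 * π) * (k ^ k * exp θ / exp k) * x ^ θ / exp θ := by
        gcongr
        rw [hxkθ]; exact natCast_add_pow_le_pow_mul_exp k hθ
    _ = √(2 * π) * (k / exp 1) ^ k * x ^ θ := by
        rw [div_pow, ← exp_nat_mul, mul_one]; field_simp
    _ ≤ √(2 * π * k) * (k / exp 1) ^ k * x ^ θ := by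
        gcongr ?_ * _ * _
        exact sqrt_le_sqrt (le_mul_of_one_le_right (by positivity) hk1)
    _ ≤ k ! * x ^ θ := by gcongr; exact Stirling.le_factorial_stirling k
    _ ≤ Gamma (x + 1) := factorial_mul_rpow_le_Gamma_add_one hx0 hkx hxk

theorem integral_rpow_sub_one_mul_exp_neg_div_two_le {a z : ℝ} (ha : 0 < a) (hz : 0 ≤ z) :
    ∫ t in (0 : ℝ)..z, t ^ (a - 1) * exp (-t / 2) ≤ z ^ a / a := by
  have hpow : IntervalIntegrable (fun t : ℝ => t ^ (a - 1)) MeasureTheory.volume 0 z :=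
    intervalIntegral.intervalIntegrable_rpow' (by linarith)
  calc ∫ t in (0 : ℝ)..z, t ^ (a - 1) * exp (-t / 2) ≤ ∫ t in (0 : ℝ)..z, t ^ (a - 1) := by
        refine intervalIntegral.integral_mono_on hz
          (hpow.mul_continuousOn (by fun_prop)) hpow fun t ht => ?_
        exact mul_le_of_le_one_right (rpow_nonneg ht.1 _) (exp_le_one_iff.2 (by linarith [ht.1]))
    _ = z ^ a / a := by
        rw [integral_rpow (Or.inl (by linarith)), sub_add_cancel, zero_rpow ha.ne', sub_zero]

/-- chi-square lower-tail bound `P(χ²_n < n/4) ≤ (e/4)^{n/2}/√(2π)`. -/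
theorem chi_square_lower_tail (n : ℕ) (hn : 2 ≤ n) :
    (1 / ((2 : ℝ) ^ ((n : ℝ) / 2) * Real.Gamma ((n : ℝ) / 2))) *
      (∫ t in (0 : ℝ)..((n : ℝ) / 4), t ^ ((n : ℝ) / 2 - 1) * Real.exp (-t / 2)) ≤
    (Real.exp 1 / 4) ^ ((n : ℝ) / 2) / Real.sqrt (2 * Real.pi) := by
  set x : ℝ := n / 2
  have hx : 1 ≤ x := by
    rw [le_div_iff₀ two_pos]; exact_mod_cast (by omega : 1 * 2 ≤ n)
  have hx0 : 0 < x := by linarith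
  have hn4 : (n : ℝ) / 4 = x / 2 := by ring
  calc 1 / (2 ^ x * Gamma x) * ∫ t in (0 : ℝ)..(n : ℝ) / 4, t ^ (x - 1) * exp (-t / 2)
      ≤ 1 / (2 ^ x * Gamma x) * ((x / 2) ^ x / x) := by
        rw [hn4]
        gcongr
        exact integral_rpow_sub_one_mul_exp_neg_div_two_le hx0 (by positivity)
    _ = (exp 1 / 4) ^ x * (x / exp 1) ^ x / Gamma (x + 1) := by
        have hbase : (exp 1 / 4) ^ x * (x / exp 1) ^ x = (x / 2) ^ x / 2 ^ x := by
          rw [← mul_rpow (by positivity) (by positivity), ← div_rpow (by positivity) zero_le_two]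
          congr 1
          field_simp
          ring
        rw [hbase, Gamma_add_one hx0.ne']
        field_simp
    _ ≤ (exp 1 / 4) ^ x / √(2 * π) := by
        rw [div_le_div_iff₀ (Gamma_pos_of_pos (by linarith)) (by positivity), mul_assoc]
        gcongr
        rw [mul_comm]
        exact sqrt_two_mul_pi_mul_div_exp_rpow_le_Gamma_add_one hx
end

section
/- Let M be an n×q real matrix, x ∈ ℝ^n, and 0 < λ₁ ≤ λ₂. For i = 1, 2 let b_i ∈ ℝ^q be a minimizer of b ↦ ‖x − Mb‖₂²/(2n) + λ_i ‖b‖₁. Then ‖x − M b₁‖₂ ≤ ‖x − M b₂‖₂; that is, the residual norm of the Lasso is nondecreasing in the penalty level. -/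
/-- the residual norm of the Lasso is nondecreasing in the penalty level. -/
theorem lasso_residual_norm_monotone
    (n q : ℕ) (hn : 0 < n) (M : Matrix (Fin n) (Fin q) ℝ) (x : Fin n → ℝ)
    (lam₁ lam₂ : ℝ) (hlam₁ : 0 < lam₁) (hlam : lam₁ ≤ lam₂)
    (b₁ b₂ : Fin q → ℝ)
    (hb₁ : ∀ b : Fin q → ℝ,
      (∑ i, (x i - ∑ k, M i k * b₁ k) ^ 2) / (2 * n) + lam₁ * ∑ k, |b₁ k| ≤
      (∑ i, (x i - ∑ k, M i k * b k) ^ 2) / (2 * n) + lam₁ * ∑ k, |b k|)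
    (hb₂ : ∀ b : Fin q → ℝ,
      (∑ i, (x i - ∑ k, M i k * b₂ k) ^ 2) / (2 * n) + lam₂ * ∑ k, |b₂ k| ≤
      (∑ i, (x i - ∑ k, M i k * b k) ^ 2) / (2 * n) + lam₂ * ∑ k, |b k|) :
    Real.sqrt (∑ i, (x i - ∑ k, M i k * b₁ k) ^ 2) ≤
      Real.sqrt (∑ i, (x i - ∑ k, M i k * b₂ k) ^ 2) := by
  set A : Fin n → ℝ := fun i => ∑ k, M i k * b₁ k with hA
  set B : Fin n → ℝ := fun i => ∑ k, M i k * b₂ k with hB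
  set S1 : ℝ := ∑ i, (x i - A i) ^ 2 with hS1
  set S2 : ℝ := ∑ i, (x i - B i) ^ 2 with hS2
  set L1 : ℝ := ∑ k, |b₁ k| with hL1
  set L2 : ℝ := ∑ k, |b₂ k| with hL2
  apply Real.sqrt_le_sqrt
  by_contra hcon
  push_neg at hcon
  -- hcon : S2 < S1
  have hnpos : (0 : ℝ) < 2 * n := by positivity
  have h1 : S1 / (2 * n) + lam₁ * L1 ≤ S2 / (2 * n) + lam₁ * L2 := hb₁ b₂
  have h2 : S2 / (2 * n) + lam₂ * L2 ≤ S1 / (2 * n) + lam₂ * L1 := hb₂ b₁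
  have hdiv : S2 / (2 * n) < S1 / (2 * n) := by gcongr
  have hL : L1 < L2 := by
    have : lam₁ * L1 < lam₁ * L2 := by linarith
    exact lt_of_mul_lt_mul_left this hlam₁.le
  -- adding h1 and h2 gives (lam₂ - lam₁) * (L2 - L1) ≤ 0, hence lam₁ = lam₂
  have hlameq : lam₁ = lam₂ := by
    nlinarith [mul_le_mul_of_nonneg_right hlam (sub_nonneg.mpr hL.le)]
  subst hlameq
  -- now both objectives are equal
  have heq : S1 / (2 * n) + lam₁ * L1 = S2 / (2 * n) + lam₁ * L2 := le_antisymm h1 (by linarith)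
  -- midpoint argument
  have hm := hb₁ (fun k => (b₁ k + b₂ k) / 2)
  have hmid : ∀ i, (∑ k, M i k * ((b₁ k + b₂ k) / 2)) = (A i + B i) / 2 := by
    intro i
    rw [hA, hB]
    rw [Finset.sum_congr rfl (fun k _ => by ring :
      ∀ k ∈ Finset.univ, M i k * ((b₁ k + b₂ k) / 2) = M i k * b₁ k / 2 + M i k * b₂ k / 2)]
    rw [Finset.sum_add_distrib, ← Finset.sum_div, ← Finset.sum_div]
    ring
  set D : ℝ := ∑ i, (A i - B i) ^ 2 with hD
  have hSmid : (∑ i, (x i - ∑ k, M i k * ((b₁ k + b₂ k) / 2)) ^ 2)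
      = S1 / 2 + S2 / 2 - D / 4 := by
    rw [hS1, hS2, hD, Finset.sum_div, Finset.sum_div, Finset.sum_div,
      ← Finset.sum_add_distrib, ← Finset.sum_sub_distrib]
    apply Finset.sum_congr rfl
    intro i _
    rw [hmid i]
    ring
  have hLmid : (∑ k, |(fun k => (b₁ k + b₂ k) / 2) k|) ≤ (L1 + L2) / 2 := by
    have hrhs : (L1 + L2) / 2 = ∑ k, (|b₁ k| + |b₂ k|) / 2 := by
      rw [hL1, hL2, ← Finset.sum_add_distrib, Finset.sum_div]
    rw [hrhs]
    apply Finset.sum_le_sum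
    intro k _
    simp only
    rw [abs_div, abs_two]
    gcongr
    exact abs_add_le _ _
  rw [hSmid] at hm
  have hDnonneg : 0 ≤ D := Finset.sum_nonneg fun i _ => sq_nonneg _
  have hstep : S1 / (2 * n) + lam₁ * L1 ≤
      (S1 / 2 + S2 / 2 - D / 4) / (2 * n) + lam₁ * ((L1 + L2) / 2) := by
    have := mul_le_mul_of_nonneg_left hLmid hlam₁.le
    linarith
  have hsplit : (S1 / 2 + S2 / 2 - D / 4) / (2 * n)
      = S1 / (2 * n) / 2 + S2 / (2 * n) / 2 - D / (2 * n) / 4 := by ring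
  have hlamsplit : lam₁ * ((L1 + L2) / 2) = lam₁ * L1 / 2 + lam₁ * L2 / 2 := by ring
  rw [hsplit, hlamsplit] at hstep
  have hd : D / (2 * n) ≤ 0 := by linarith
  have hD0 : D ≤ 0 := by
    by_contra h
    push_neg at h
    have := div_pos h hnpos
    linarith
  have hDz : D = 0 := le_antisymm hD0 hDnonneg
  have hAB : ∀ i, A i = B i := by
    intro i
    have h0 := (Finset.sum_eq_zero_iff_of_nonneg (fun i _ => sq_nonneg (A i - B i))).mp hDz i
      (Finset.mem_univ i)
    have := sq_eq_zero_iff.mp h0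
    linarith
  have : S1 = S2 := by
    rw [hS1, hS2]
    exact Finset.sum_congr rfl fun i _ => by rw [hAB i]
  linarith
end

section
/- Let M be an n×q real matrix, x ∈ ℝ^n, λ > 0, and let γ̂ ∈ ℝ^q be a minimizer of b ↦ ‖x − Mb‖₂²/(2n) + λ‖b‖₁, with residual z = x − Mγ̂. Then x^T z = ‖z‖₂² + nλ‖γ̂‖₁. Consequently, if z ≠ 0 then x^T z ≥ ‖z‖₂² > 0 and ‖z‖₂/|x^T z| ≤ 1/‖z‖₂. -/
/-! Scaling the Lasso solution along its own ray, `b = t • γ̂` with `t > 0`, keeps the `ℓ1`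
penalty linear in `t`, so the objective restricted to this ray is a quadratic in `t` minimised at
the interior point `t = 1`. Its derivative there vanishes, which says `⟪z, Mγ̂⟫ = nλ‖γ̂‖₁`; adding
`‖z‖₂²` gives `⟪x, z⟫` because `x = z + Mγ̂`. -/

open Matrix

theorem two_mul_add_eq_zero_of_forall_pos_le {a b : ℝ} (h : ∀ t > 0, a + b ≤ a * t ^ 2 + b * t) :
    2 * a + b = 0 := by
  have hmin : IsLocalMin (fun t => a * t ^ 2 + b * t) 1 :=
    Filter.mem_of_superset (Ioi_mem_nhds one_pos) fun t ht => by simpa using h t ht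
  have hderiv : HasDerivAt (fun t => a * t ^ 2 + b * t) (2 * a + b) 1 := by
    refine (((hasDerivAt_pow 2 (1 : ℝ)).const_mul a).fun_add
      ((hasDerivAt_id' (1 : ℝ)).const_mul b)).congr_deriv ?_
    norm_num [mul_comm]
  exact hmin.hasDerivAt_eq_zero hderiv

theorem sub_dotProduct_eq_of_forall_pos_le {ι : Type*} [Fintype ι] {x v : ι → ℝ} {s : ℝ}
    (h : ∀ t > 0, (x - v) ⬝ᵥ (x - v) / 2 + s ≤ (x - t • v) ⬝ᵥ (x - t • v) / 2 + t * s) :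
    (x - v) ⬝ᵥ v = s := by
  have expand (t : ℝ) :
      (x - t • v) ⬝ᵥ (x - t • v) = x ⬝ᵥ x - 2 * t * (x ⬝ᵥ v) + t ^ 2 * (v ⬝ᵥ v) := by
    simp only [sub_dotProduct, dotProduct_sub, smul_dotProduct, dotProduct_smul,
      dotProduct_comm v x, smul_eq_mul]
    ring
  have hquad := two_mul_add_eq_zero_of_forall_pos_le (a := v ⬝ᵥ v / 2) (b := s - x ⬝ᵥ v)
    fun t ht => by
      have := h t ht
      rw [expand, ← one_smul ℝ v, expand, one_smul] at this
      linarith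
  rw [sub_dotProduct]
  linarith

theorem lasso_residual_dotProduct_mulVec_eq {m ι : Type*} [Fintype m] [Fintype ι]
    (M : Matrix m ι ℝ) (x : m → ℝ) {N lam : ℝ} (hN : 0 < N) {γ : ι → ℝ}
    (hγ : ∀ b : ι → ℝ, (x - M *ᵥ γ) ⬝ᵥ (x - M *ᵥ γ) / (2 * N) + lam * ∑ k, |γ k| ≤
      (x - M *ᵥ b) ⬝ᵥ (x - M *ᵥ b) / (2 * N) + lam * ∑ k, |b k|) :
    (x - M *ᵥ γ) ⬝ᵥ M *ᵥ γ = N * lam * ∑ k, |γ k| := by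
  refine sub_dotProduct_eq_of_forall_pos_le fun t ht => ?_
  have hpen : ∑ k, |(t • γ) k| = t * ∑ k, |γ k| := by
    simp only [Pi.smul_apply, smul_eq_mul, abs_mul, abs_of_pos ht, Finset.mul_sum]
  have h := hγ (t • γ)
  rw [mulVec_smul, hpen] at h
  have := mul_le_mul_of_nonneg_left h (by positivity : (0 : ℝ) ≤ 2 * N)
  field_simp at this ⊢
  linarith

theorem sqrt_div_abs_le_one_div_sqrt {a b : ℝ} (ha : 0 < a) (hab : a ≤ b) :
    √a / |b| ≤ 1 / √a := by
  rw [abs_of_pos (ha.trans_le hab), div_le_div_iff₀ (ha.trans_le hab) (Real.sqrt_pos.2 ha), one_mul,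
    Real.mul_self_sqrt ha.le]
  exact hab

/-- inner-product identity `xᵀz = ‖z‖₂² + nλ‖γ̂‖₁` for the Lasso residual,
and its consequences. -/
theorem lasso_residual_inner_product
    (n q : ℕ) (hn : 0 < n) (M : Matrix (Fin n) (Fin q) ℝ) (x : Fin n → ℝ)
    (lam : ℝ) (hlam : 0 < lam) (γ : Fin q → ℝ)
    (hγ : ∀ b : Fin q → ℝ,
      (∑ i, (x i - ∑ k, M i k * γ k) ^ 2) / (2 * n) + lam * ∑ k, |γ k| ≤
      (∑ i, (x i - ∑ k, M i k * b k) ^ 2) / (2 * n) + lam * ∑ k, |b k|)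
    (z : Fin n → ℝ) (hz : z = fun i => x i - ∑ k, M i k * γ k) :
    (∑ i, x i * z i) = (∑ i, (z i) ^ 2) + n * lam * ∑ k, |γ k| ∧
    (z ≠ 0 →
      (∑ i, (z i) ^ 2) ≤ (∑ i, x i * z i) ∧ 0 < (∑ i, x i * z i) ∧
      Real.sqrt (∑ i, (z i) ^ 2) / |∑ i, x i * z i| ≤ 1 / Real.sqrt (∑ i, (z i) ^ 2)) := by
  have hsq : ∀ v : Fin n → ℝ, ∑ i, v i ^ 2 = v ⬝ᵥ v := fun v => by simp only [dotProduct, sq]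
  have hdot : ∀ v w : Fin n → ℝ, ∑ i, v i * w i = v ⬝ᵥ w := fun _ _ => rfl
  change z = x - M *ᵥ γ at hz
  have hfit : z ⬝ᵥ M *ᵥ γ = n * lam * ∑ k, |γ k| :=
    hz ▸ lasso_residual_dotProduct_mulVec_eq M x (by exact_mod_cast hn) fun b => by
      rw [← hsq, ← hsq]; exact hγ b
  have hid : x ⬝ᵥ z = z ⬝ᵥ z + n * lam * ∑ k, |γ k| := by
    rw [← hfit, ← dotProduct_add, hz, sub_add_cancel]
    exact dotProduct_comm _ _
  rw [hsq, hdot]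
  refine ⟨hid, fun hz0 => ?_⟩
  have hpos : 0 < z ⬝ᵥ z := by simpa using dotProduct_self_star_pos_iff.2 hz0
  have hle : z ⬝ᵥ z ≤ x ⬝ᵥ z := by
    rw [hid]
    exact le_add_of_nonneg_right (by positivity)
  exact ⟨hle, hpos.trans_le hle, sqrt_div_abs_le_one_div_sqrt hpos hle⟩
end

section
/- Let X_A be an n×a real matrix of full column rank a, let P_A = X_A (X_A^T X_A)^{-1} X_A^T be the orthogonal projection onto its column space, let x ∈ ℝ^n and s ∈ ℝ^a, and for λ > 0 define z(λ) = x − X_A (X_A^T X_A)^{-1} (X_A^T x − nλ s). Then: (i) X_A^T z(λ) = nλ s and ‖P_A z(λ)‖₂² = n²λ² s^T (X_A^T X_A)^{-1} s; (ii) ‖z(λ)‖₂² = ‖(I − P_A)x‖₂² + n²λ² s^T (X_A^T X_A)^{-1} s, so that ‖z(λ)‖₂ is nondecreasing in λ on (0,∞); (iii) for 0 < λ ≤ λ' with z(λ) ≠ 0 and z(λ') ≠ 0, one has nλ/‖z(λ)‖₂ ≤ nλ'/‖z(λ')‖₂. (This is the monotonicity along a linear segment of the Lasso path with active set A and sign vector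 s, underlying Proposition 1(i).) -/
open Matrix

/-- monotonicity along a linear segment of the Lasso path with active set `A`
and sign vector `s` (underlying Proposition 1(i)). -/
theorem lasso_path_segment_monotone
    (n a : ℕ) (hn : 0 < n)
    (X : Matrix (Fin n) (Fin a) ℝ) (hrank : X.rank = a)
    (x : Fin n → ℝ) (s : Fin a → ℝ)
    (G : Matrix (Fin a) (Fin a) ℝ) (hG : G = Xᵀ * X)
    (PA : Matrix (Fin n) (Fin n) ℝ) (hPA : PA = X * G⁻¹ * Xᵀ)
    (z : ℝ → Fin n → ℝ)
    (hz : ∀ lam : ℝ, z lam =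
      x - X.mulVec (G⁻¹.mulVec (Xᵀ.mulVec x - ((n : ℝ) * lam) • s))) :
    -- (i)
    (∀ lam : ℝ, 0 < lam →
      Xᵀ.mulVec (z lam) = ((n : ℝ) * lam) • s ∧
      (∑ i, (PA.mulVec (z lam) i) ^ 2) =
        (n : ℝ) ^ 2 * lam ^ 2 * ∑ i, s i * G⁻¹.mulVec s i) ∧
    -- (ii)
    (∀ lam : ℝ, 0 < lam →
      (∑ i, (z lam i) ^ 2) =
        (∑ i, ((x - PA.mulVec x) i) ^ 2) +
          (n : ℝ) ^ 2 * lam ^ 2 * ∑ i, s i * G⁻¹.mulVec s i) ∧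
    (∀ lam lam' : ℝ, 0 < lam → lam ≤ lam' →
      Real.sqrt (∑ i, (z lam i) ^ 2) ≤ Real.sqrt (∑ i, (z lam' i) ^ 2)) ∧
    -- (iii)
    (∀ lam lam' : ℝ, 0 < lam → lam ≤ lam' → z lam ≠ 0 → z lam' ≠ 0 →
      (n : ℝ) * lam / Real.sqrt (∑ i, (z lam i) ^ 2) ≤
        (n : ℝ) * lam' / Real.sqrt (∑ i, (z lam' i) ^ 2)) := by
  classical
  -- invertibility of G
  have hGrank : G.rank = a := by rw [hG, Matrix.rank_transpose_mul_self, hrank]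
  have hGunit : IsUnit G := by
    rw [← Matrix.mulVec_surjective_iff_isUnit]
    have hr : LinearMap.range G.mulVecLin = ⊤ := by
      apply Submodule.eq_top_of_finrank_eq
      rw [Module.finrank_pi, Fintype.card_fin]
      exact hGrank
    intro y
    have hy : y ∈ LinearMap.range G.mulVecLin := hr ▸ Submodule.mem_top
    obtain ⟨v, hv⟩ := hy
    exact ⟨v, hv⟩
  have hdet : IsUnit G.det := (Matrix.isUnit_iff_isUnit_det G).mp hGunit
  have hGinv : G * G⁻¹ = 1 := Matrix.mul_nonsing_inv G hdet
  have hGsymm : Gᵀ = G := by rw [hG, Matrix.transpose_mul, Matrix.transpose_transpose]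
  -- abbreviations
  set w : Fin a → ℝ := Xᵀ.mulVec x with hw
  have hsq : ∀ (m : ℕ) (v : Fin m → ℝ), ∑ i, v i ^ 2 = v ⬝ᵥ v := by
    intro m v; simp [dotProduct, sq]
  have hdot : ∀ (u : Fin a → ℝ) (v : Fin n → ℝ),
      (X.mulVec u) ⬝ᵥ v = u ⬝ᵥ (Xᵀ.mulVec v) := by
    intro u v
    rw [dotProduct_comm, Matrix.dotProduct_mulVec, ← Matrix.mulVec_transpose,
      dotProduct_comm]
  set q : ℝ := ∑ i, s i * G⁻¹.mulVec s i with hqdef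
  have hqdot : q = s ⬝ᵥ G⁻¹.mulVec s := rfl
  -- (i) first part
  have hXz : ∀ lam : ℝ, Xᵀ.mulVec (z lam) = ((n : ℝ) * lam) • s := by
    intro lam
    rw [hz lam, Matrix.mulVec_sub, Matrix.mulVec_mulVec, Matrix.mulVec_mulVec, ← hG,
      hGinv, Matrix.one_mulVec, ← hw, sub_sub_cancel]
  -- P_A applied to z
  have hPz : ∀ lam : ℝ, PA.mulVec (z lam) = ((n : ℝ) * lam) • X.mulVec (G⁻¹.mulVec s) := by
    intro lam
    rw [hPA, ← Matrix.mulVec_mulVec, ← Matrix.mulVec_mulVec, hXz lam, Matrix.mulVec_smul,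
      Matrix.mulVec_smul]
  -- (i) second part
  have hPnorm : ∀ lam : ℝ, (∑ i, (PA.mulVec (z lam) i) ^ 2) = (n : ℝ) ^ 2 * lam ^ 2 * q := by
    intro lam
    rw [hsq n _, hPz lam, dotProduct_smul, smul_dotProduct, smul_smul, hdot,
      Matrix.mulVec_mulVec, Matrix.mulVec_mulVec, ← hG]
    rw [hGinv, Matrix.one_mulVec, dotProduct_comm, ← hqdot, smul_eq_mul]
    ring
  -- decomposition z = (x - P_A x) + P_A z
  set u0 : Fin n → ℝ := x - PA.mulVec x with hu0
  have hPx : PA.mulVec x = X.mulVec (G⁻¹.mulVec w) := by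
    rw [hPA, ← Matrix.mulVec_mulVec, ← Matrix.mulVec_mulVec, hw]
  have hzdecomp : ∀ lam : ℝ, z lam = u0 + PA.mulVec (z lam) := by
    intro lam
    rw [hPz lam, hu0, hPx, hz lam, Matrix.mulVec_sub G⁻¹, Matrix.mulVec_sub X,
      Matrix.mulVec_smul, Matrix.mulVec_smul]
    abel
  -- orthogonality
  have hXu0 : Xᵀ.mulVec u0 = 0 := by
    rw [hu0, Matrix.mulVec_sub, hPx, Matrix.mulVec_mulVec, Matrix.mulVec_mulVec, ← hG, hGinv,
      Matrix.one_mulVec, ← hw, sub_self]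
  have hperp : ∀ t : Fin a → ℝ, u0 ⬝ᵥ X.mulVec t = 0 := by
    intro t
    rw [dotProduct_comm, hdot, hXu0, dotProduct_zero]
  set C : ℝ := ∑ i, u0 i ^ 2 with hC
  -- (ii) first part
  have hnorm : ∀ lam : ℝ, (∑ i, (z lam i) ^ 2) = C + (n : ℝ) ^ 2 * lam ^ 2 * q := by
    intro lam
    rw [hsq n _, hC, hsq n u0, ← hPnorm lam, hsq n _]
    nth_rewrite 1 [hzdecomp lam]
    nth_rewrite 2 [hzdecomp lam]
    rw [add_dotProduct, dotProduct_add, dotProduct_add, hPz lam,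
      dotProduct_smul, smul_dotProduct,
      dotProduct_comm (X *ᵥ G⁻¹ *ᵥ s) u0, hperp]
    simp
  have hn2 : (0:ℝ) < (n : ℝ) ^ 2 := by positivity
  have hCnn : 0 ≤ C := Finset.sum_nonneg fun i _ => sq_nonneg _
  have hqnn : 0 ≤ q := by
    have h1 := hPnorm 1
    have h2 : (0:ℝ) ≤ ∑ i, (PA.mulVec (z 1) i) ^ 2 := Finset.sum_nonneg fun i _ => sq_nonneg _
    nlinarith
  have hpos : ∀ lam : ℝ, z lam ≠ 0 → 0 < ∑ i, (z lam i) ^ 2 := by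
    intro lam hne
    have : ∃ i, z lam i ≠ 0 := by
      by_contra h
      push_neg at h
      exact hne (funext h)
    obtain ⟨i, hi⟩ := this
    exact Finset.sum_pos' (fun j _ => sq_nonneg _) ⟨i, Finset.mem_univ i, by positivity⟩
  refine ⟨fun lam _ => ⟨hXz lam, hPnorm lam⟩, fun lam _ => hnorm lam, ?_, ?_⟩
  · intro lam lam' hl hle
    apply Real.sqrt_le_sqrt
    rw [hnorm lam, hnorm lam']
    have h2 : lam ^ 2 ≤ lam' ^ 2 := by nlinarith
    nlinarith [mul_le_mul_of_nonneg_right (mul_le_mul_of_nonneg_left h2 hn2.le) hqnn]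
  · intro lam lam' hl hle hz1 hz2
    have hl' : 0 < lam' := hl.trans_le hle
    have hS : 0 < ∑ i, (z lam i) ^ 2 := hpos lam hz1
    have hS' : 0 < ∑ i, (z lam' i) ^ 2 := hpos lam' hz2
    have hN : 0 < Real.sqrt (∑ i, (z lam i) ^ 2) := Real.sqrt_pos.mpr hS
    have hN' : 0 < Real.sqrt (∑ i, (z lam' i) ^ 2) := Real.sqrt_pos.mpr hS'
    rw [div_le_div_iff₀ hN hN']
    have hnl : (0:ℝ) ≤ (n : ℝ) * lam := by positivity
    have hnl' : (0:ℝ) ≤ (n : ℝ) * lam' := by positivity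
    have key : ((n : ℝ) * lam * Real.sqrt (∑ i, (z lam' i) ^ 2)) ^ 2 ≤
        ((n : ℝ) * lam' * Real.sqrt (∑ i, (z lam i) ^ 2)) ^ 2 := by
      simp only [mul_pow]
      rw [Real.sq_sqrt hS'.le, Real.sq_sqrt hS.le, hnorm lam, hnorm lam']
      have h2 : lam ^ 2 ≤ lam' ^ 2 := by nlinarith
      nlinarith [mul_le_mul_of_nonneg_right (mul_le_mul_of_nonneg_left h2 hn2.le) hCnn]
    exact (pow_le_pow_iff_left₀ (by positivity) (by positivity) two_ne_zero).mp key
end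

section
/- Let n ≥ 1 and p ≥ 2 be integers, X an n×p real matrix with columns x_1,…,x_p, λ_univ = √((2/n) log p), a₀ ∈ (0,1), C₀ ≥ 1, and s = a₀ n / log p. Suppose there exists a map δ : ℝ^n → ℝ^p such that for every β ∈ ℝ^p with Σ_{j=1}^p min(|β_j|/λ_univ, 1) ≤ s + 1 one has ‖δ(Xβ) − β‖₂² ≤ 2 C₀ s (log p)/n. Then for every j ∈ {1,…,p} and every γ ∈ ℝ^{p−1} with X_{−j} γ = x_j, one has ‖γ‖₁² ≥ a₀ n / (4 C₀ log p). -/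
/-!
Scaling `x_j = X_{-j} γ` gives two vectors with the same image under `X`: the 1-sparse `t e_j`
and `t γ` (padded with `0` at `j`), whose capped-ℓ1 size is at most `t ‖γ‖₁ / λ_univ`. A decoder
with ℓ2 error at most `√B` on both must put its `j`-th coordinate within `√B` of both `t` and `0`,
so `t ≤ 2 √B`. The largest admissible scale `t = s λ_univ / ‖γ‖₁` then forces
`(s λ_univ)² ≤ 4 B ‖γ‖₁²`, which for `B = 2 C₀ s log p / n` is the claimed bound.
-/

open Finset Matrix

noncomputable def cappedL1 {ι : Type*} [Fintype ι] (lam : ℝ) (β : ι → ℝ) : ℝ :=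
  ∑ k, min (|β k| / lam) 1

section CappedL1

variable {ι : Type*} [Fintype ι]

lemma cappedL1_le_sum_abs_div (lam : ℝ) (β : ι → ℝ) : cappedL1 lam β ≤ (∑ k, |β k|) / lam := by
  rw [sum_div]
  exact sum_le_sum fun k _ => min_le_left _ _

lemma cappedL1_smul_single_le_one [DecidableEq ι] (lam t : ℝ) (j : ι) :
    cappedL1 lam (t • Pi.single j 1) ≤ 1 := by
  calc cappedL1 lam (t • Pi.single j 1)
      ≤ ∑ k, Pi.single (M := fun _ => ℝ) j 1 k := by
        refine sum_le_sum fun k _ => ?_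
        rcases eq_or_ne k j with rfl | hk
        · simp
        · simp [hk]
    _ = 1 := by simp

end CappedL1

lemma sq_sub_apply_le_four_mul {ι : Type*} [Fintype ι] {y β β' : ι → ℝ} {B : ℝ}
    (hβ : ∑ k, (y k - β k) ^ 2 ≤ B) (hβ' : ∑ k, (y k - β' k) ^ 2 ≤ B) (k : ι) :
    (β k - β' k) ^ 2 ≤ 4 * B := by
  have single_le {v : ι → ℝ} (hv : ∑ k, (y k - v k) ^ 2 ≤ B) : (y k - v k) ^ 2 ≤ B :=
    (single_le_sum (f := fun k => (y k - v k) ^ 2) (fun _ _ => sq_nonneg _)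
      (mem_univ k)).trans hv
  nlinarith [single_le hβ, single_le hβ', sq_nonneg (2 * y k - β k - β' k)]

lemma sq_le_mul_sq_of_forall_mul_le {L c M : ℝ} (hL : 0 ≤ L) (hc : 0 ≤ c)
    (h : ∀ t, 0 ≤ t → t * L ≤ c → t ^ 2 ≤ M) : c ^ 2 ≤ M * L ^ 2 := by
  rcases hL.eq_or_lt with rfl | hL
  · have hM : 0 ≤ M := by simpa using h 0 le_rfl (by simpa using hc)
    nlinarith [h (M + 1) (by linarith) (by simpa using hc)]
  · have := h (c / L) (by positivity) (by rw [div_mul_cancel₀ _ hL.ne'])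
    rwa [div_pow, div_le_iff₀ (by positivity)] at this

theorem sq_mul_le_of_decoder {m ι : Type*} [Fintype m] [Fintype ι] [DecidableEq ι]
    (X : Matrix m ι ℝ) (δ : (m → ℝ) → ι → ℝ) {lam s B : ℝ} (hlam : 0 < lam) (hs : 0 ≤ s)
    (hδ : ∀ β, cappedL1 lam β ≤ s + 1 → ∑ k, (δ (X *ᵥ β) k - β k) ^ 2 ≤ B)
    {j : ι} {γ : ι → ℝ} (hγj : γ j = 0) (hγ : X *ᵥ γ = X.col j) :
    (s * lam) ^ 2 ≤ 4 * B * (∑ k, |γ k|) ^ 2 := by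
  refine sq_le_mul_sq_of_forall_mul_le (by positivity) (by positivity) fun t ht htL => ?_
  have same_image : X *ᵥ (t • γ) = X *ᵥ (t • Pi.single j 1) := by
    rw [mulVec_smul, mulVec_smul, hγ, mulVec_single_one]
  have hsparse : cappedL1 lam (t • γ) ≤ s + 1 := by
    calc cappedL1 lam (t • γ) ≤ (∑ k, |(t • γ) k|) / lam := cappedL1_le_sum_abs_div _ _
      _ = t * (∑ k, |γ k|) / lam := by
        simp [abs_mul, abs_of_nonneg ht, mul_sum]
      _ ≤ s + 1 := by rw [div_le_iff₀ hlam]; linarith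
  have hsingle : cappedL1 lam (t • Pi.single j 1) ≤ s + 1 :=
    (cappedL1_smul_single_le_one lam t j).trans (by linarith)
  have := sq_sub_apply_le_four_mul (hδ _ hsingle) (same_image ▸ hδ _ hsparse) j
  simpa [hγj] using this

lemma sum_erase_eq_sum_update_zero {ι M : Type*} [Fintype ι] [DecidableEq ι] [AddCommMonoid M]
    (F : ι → ℝ → M) (hF : ∀ k, F k 0 = 0) (γ : ι → ℝ) (j : ι) :
    ∑ k ∈ univ.erase j, F k (γ k) = ∑ k, F k (Function.update γ j 0 k) := by
  rw [← sum_erase univ (a := j) (by simp [hF])]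
  refine sum_congr rfl fun k hk => ?_
  rw [Function.update_of_ne (ne_of_mem_erase hk)]

theorem sparse_recovery_l1_lower_bound_general
    (n p : ℕ) (hn : 0 < n) (hp : 2 ≤ p)
    (X : Matrix (Fin n) (Fin p) ℝ)
    (lamUniv : ℝ) (hlamUniv : lamUniv = Real.sqrt ((2 / n) * Real.log p))
    (a₀ C₀ : ℝ) (ha₀0 : 0 < a₀) (hC₀ : 1 ≤ C₀)
    (s : ℝ) (hs : s = a₀ * n / Real.log p)
    (δ : (Fin n → ℝ) → (Fin p → ℝ))
    (hδ : ∀ β : Fin p → ℝ,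
      (∑ j, min (|β j| / lamUniv) 1) ≤ s + 1 →
      (∑ j, (δ (X.mulVec β) j - β j) ^ 2) ≤ 2 * C₀ * s * Real.log p / n)
    (j : Fin p) (γ : Fin p → ℝ)
    (hγ : ∀ i : Fin n, (∑ k ∈ Finset.univ.erase j, γ k * X i k) = X i j) :
    a₀ * n / (4 * C₀ * Real.log p) ≤ (∑ k ∈ Finset.univ.erase j, |γ k|) ^ 2 := by
  have hlog : 0 < Real.log p := Real.log_pos (by exact_mod_cast hp)
  have hn' : (0 : ℝ) < n := by exact_mod_cast hn
  have hs0 : 0 < s := by rw [hs]; positivity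
  have hlam2 : lamUniv ^ 2 = 2 / n * Real.log p := by
    rw [hlamUniv, Real.sq_sqrt (by positivity)]
  have hrepr : X *ᵥ Function.update γ j 0 = X.col j := by
    ext i
    rw [col_apply, ← hγ i, sum_erase_eq_sum_update_zero (fun k x => x * X i k) (fun _ => zero_mul _)]
    simp only [mulVec, dotProduct, mul_comm]
  have key := sq_mul_le_of_decoder X δ (by rw [hlamUniv]; positivity) hs0.le hδ
    (by simp) hrepr
  rw [← sum_erase_eq_sum_update_zero (fun _ x => |x|) (by simp), mul_pow, hlam2] at key
  rw [show a₀ * n / (4 * C₀ * Real.log p) = s / (4 * C₀) by rw [hs]; field_simp,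
    div_le_iff₀ (by positivity)]
  have hfactor : 0 < 2 * s * Real.log p / n := by positivity
  refine le_of_mul_le_mul_left ?_ hfactor
  calc 2 * s * Real.log p / n * s = s ^ 2 * (2 / n * Real.log p) := by ring
    _ ≤ _ := key
    _ = _ := by ring

/-- if a decoder achieves the optimal ℓ2 recovery rate over capped-ℓ1 sparse
vectors in the noiseless case, then every representation of a column of `X` in terms of the
other columns has large ℓ1 norm. -/
theorem sparse_recovery_l1_lower_bound
    (n p : ℕ) (hn : 0 < n) (hp : 2 ≤ p)
    (X : Matrix (Fin n) (Fin p) ℝ)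
    (lamUniv : ℝ) (hlamUniv : lamUniv = Real.sqrt ((2 / n) * Real.log p))
    (a₀ C₀ : ℝ) (ha₀0 : 0 < a₀) (ha₀1 : a₀ < 1) (hC₀ : 1 ≤ C₀)
    (s : ℝ) (hs : s = a₀ * n / Real.log p)
    (δ : (Fin n → ℝ) → (Fin p → ℝ))
    (hδ : ∀ β : Fin p → ℝ,
      (∑ j, min (|β j| / lamUniv) 1) ≤ s + 1 →
      (∑ j, (δ (X.mulVec β) j - β j) ^ 2) ≤ 2 * C₀ * s * Real.log p / n)
    (j : Fin p) (γ : Fin p → ℝ)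
    (hγ : ∀ i : Fin n, (∑ k ∈ Finset.univ.erase j, γ k * X i k) = X i j) :
    a₀ * n / (4 * C₀ * Real.log p) ≤ (∑ k ∈ Finset.univ.erase j, |γ k|) ^ 2 :=
  sparse_recovery_l1_lower_bound_general n p hn hp X lamUniv hlamUniv a₀ C₀ ha₀0 hC₀ s hs δ hδ j γ
    hγ
end

section
/- Let X be an n×p real matrix with columns x_1,…,x_p, let ξ > 0, λ₁ > 0, s > 0, and 0 < c_*. Let Σ̂ be the p×p matrix with entries Σ̂_{jk} = (x_j^T x_k/n) · 1{ |x_j^T x_k/n| ≥ λ₁ } (the thresholded Gram matrix). Suppose the smallest eigenvalue of Σ̂ is at least c_* and s λ₁ (1 + ξ)² ≤ c_*/2. Then for every S ⊆ {1,…,p} with 1 ≤ |S| ≤ s, the compatibility factor satisfies κ²(ξ, S) ≥ c_*/2. -/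
open Finset

/-!
Hard thresholding moves each entry of the Gram matrix `G = XᵀX/n` by at most `λ₁`, so the
quadratic forms of `Σ̂` and `G` differ by at most `λ₁ ‖u‖₁²`. On the cone, `‖u‖₁ ≤ (1 + ξ) ‖u_S‖₁`
and Cauchy–Schwarz gives `‖u_S‖₁² ≤ |S| ‖u‖₂²`, so the perturbation costs at most
`s λ₁ (1 + ξ)² ‖u‖₂² ≤ (c_*/2) ‖u‖₂²` of the eigenvalue bound. Hence `‖Xu‖₂²/n ≥ (c_*/2) ‖u‖₂²`,
and `‖u‖₂² ≥ ‖u_S‖₁²/|S|` turns this into the compatibility bound.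
-/

def hardThreshold {α : Type*} [AddGroup α] [LinearOrder α] (t x : α) : α :=
  if t ≤ |x| then x else 0

theorem abs_hardThreshold_sub_self_le {α : Type*} [AddCommGroup α] [LinearOrder α]
    [IsOrderedAddMonoid α] {t : α} (ht : 0 ≤ t) (x : α) : |hardThreshold t x - x| ≤ t := by
  unfold hardThreshold
  split_ifs with h
  · simpa using ht
  · simpa using (not_le.mp h).le

theorem sum_sum_mul_gram_div_mul {ι m K : Type*} [Fintype ι] [Fintype m] [Field K]
    (X : Matrix m ι K) (u : ι → K) (c : K) :
    ∑ j, ∑ k, u j * ((∑ i, X i j * X i k) / c) * u k = (∑ i, (∑ k, X i k * u k) ^ 2) / c := by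
  simp_rw [sq, sum_mul_sum, sum_div, mul_sum, sum_mul]
  rw [sum_comm_cycle]
  refine sum_congr rfl fun i _ => sum_congr rfl fun j _ => sum_congr rfl fun k _ => ?_
  ring

section OrderedRing

variable {ι R : Type*} [Fintype ι] [CommRing R] [LinearOrder R] [IsStrictOrderedRing R]

theorem sum_sum_mul_mul_le_add_sq_sum_abs {A B : Matrix ι ι R} {δ : R}
    (hAB : ∀ j k, |A j k - B j k| ≤ δ) (u : ι → R) :
    ∑ j, ∑ k, u j * A j k * u k ≤ ∑ j, ∑ k, u j * B j k * u k + δ * (∑ j, |u j|) ^ 2 := by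
  have hentry : ∀ j k, u j * A j k * u k ≤ u j * B j k * u k + |u j| * δ * |u k| := by
    intro j k
    calc u j * A j k * u k = u j * B j k * u k + u j * (A j k - B j k) * u k := by ring
      _ ≤ u j * B j k * u k + |u j| * |A j k - B j k| * |u k| := by
          rw [← abs_mul, ← abs_mul]
          exact add_le_add_right (le_abs_self _) _
      _ ≤ u j * B j k * u k + |u j| * δ * |u k| := by gcongr; exact hAB j k
  calc ∑ j, ∑ k, u j * A j k * u k
      ≤ ∑ j, ∑ k, (u j * B j k * u k + |u j| * δ * |u k|) :=
        sum_le_sum fun j _ => sum_le_sum fun k _ => hentry j k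
    _ = ∑ j, ∑ k, u j * B j k * u k + δ * (∑ j, |u j|) ^ 2 := by
        simp_rw [sum_add_distrib, sq, sum_mul_sum, mul_sum]
        congr 1
        refine sum_congr rfl fun j _ => sum_congr rfl fun k _ => ?_
        ring

theorem sq_sum_abs_le_card_mul_sum_sq (S : Finset ι) (u : ι → R) :
    (∑ k ∈ S, |u k|) ^ 2 ≤ #S * ∑ j, u j ^ 2 := by
  calc (∑ k ∈ S, |u k|) ^ 2 ≤ #S * ∑ k ∈ S, |u k| ^ 2 := sq_sum_le_card_mul_sum_sq
    _ ≤ #S * ∑ j, u j ^ 2 := by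
        simp_rw [sq_abs]
        gcongr
        exact subset_univ S

theorem sum_abs_le_of_mem_cone [DecidableEq ι] {S : Finset ι} {u : ι → R} {ξ : R}
    (hcone : ∑ k ∈ Sᶜ, |u k| ≤ ξ * ∑ k ∈ S, |u k|) :
    ∑ j, |u j| ≤ (1 + ξ) * ∑ k ∈ S, |u k| := by
  rw [← sum_add_sum_compl S]
  linarith

end OrderedRing

theorem le_mul_div_of_mul_le_div {K : Type*} [Field K] [LinearOrder K] [IsStrictOrderedRing K]
    {c a m Q T n : K} (hc : 0 ≤ c) (ha : 0 < a) (hm : 0 ≤ m)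
    (haQ : a ^ 2 ≤ m * Q) (hQT : c * Q ≤ T / n) : c ≤ T * m / (n * a ^ 2) := by
  have ha2 : 0 < a ^ 2 := by positivity
  calc c = c * a ^ 2 / a ^ 2 := by field_simp
    _ ≤ c * (m * Q) / a ^ 2 := by gcongr
    _ = c * Q * m / a ^ 2 := by ring
    _ ≤ T / n * m / a ^ 2 := by gcongr
    _ = T * m / (n * a ^ 2) := by rw [div_mul_eq_mul_div, div_div]

theorem compatibility_from_thresholded_gram_general
    (n p : ℕ)
    (X : Matrix (Fin n) (Fin p) ℝ)
    (ξ lam₁ s cstar : ℝ) (hlam₁ : 0 < lam₁) (hcstar : 0 < cstar)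
    (Sighat : Matrix (Fin p) (Fin p) ℝ)
    (hSighat : ∀ j k : Fin p, Sighat j k =
      if lam₁ ≤ |(∑ i, X i j * X i k) / n| then (∑ i, X i j * X i k) / n else 0)
    (heig : ∀ u : Fin p → ℝ, cstar * (∑ j, (u j) ^ 2) ≤ ∑ j, ∑ k, u j * Sighat j k * u k)
    (hcond : s * lam₁ * (1 + ξ) ^ 2 ≤ cstar / 2)
    (S : Finset (Fin p)) (hScard : (S.card : ℝ) ≤ s)
    (u : Fin p → ℝ)
    (hcone : (∑ k ∈ Sᶜ, |u k|) ≤ ξ * ∑ k ∈ S, |u k|)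
    (huS : (∑ k ∈ S, |u k|) ≠ 0) :
    cstar / 2 ≤ (∑ i, (∑ k, X i k * u k) ^ 2) * S.card / (n * (∑ k ∈ S, |u k|) ^ 2) := by
  set a := ∑ k ∈ S, |u k|
  set Q := ∑ j, u j ^ 2
  have hQ0 : 0 ≤ Q := sum_nonneg fun j _ => sq_nonneg _
  have hCS : a ^ 2 ≤ #S * Q := sq_sum_abs_le_card_mul_sum_sq S u
  have hl1 : (∑ j, |u j|) ^ 2 ≤ ((1 + ξ) * a) ^ 2 :=
    pow_le_pow_left₀ (sum_nonneg fun j _ => abs_nonneg _) (sum_abs_le_of_mem_cone hcone) 2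
  have hclose : ∀ j k, |Sighat j k - (∑ i, X i j * X i k) / n| ≤ lam₁ := fun j k => by
    rw [hSighat]
    exact abs_hardThreshold_sub_self_le hlam₁.le _
  have hpert := sum_sum_mul_mul_le_add_sq_sum_abs hclose u
  rw [sum_sum_mul_gram_div_mul] at hpert
  have hsmall : lam₁ * ((1 + ξ) * a) ^ 2 ≤ cstar / 2 * Q := by
    calc lam₁ * ((1 + ξ) * a) ^ 2 = lam₁ * (1 + ξ) ^ 2 * a ^ 2 := by ring
      _ ≤ lam₁ * (1 + ξ) ^ 2 * (#S * Q) := by gcongr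
      _ ≤ lam₁ * (1 + ξ) ^ 2 * (s * Q) := by gcongr
      _ = s * lam₁ * (1 + ξ) ^ 2 * Q := by ring
      _ ≤ cstar / 2 * Q := by gcongr
  have hQ : cstar / 2 * Q ≤ (∑ i, (∑ k, X i k * u k) ^ 2) / n := by
    linarith [heig u, mul_le_mul_of_nonneg_left hl1 hlam₁.le]
  exact le_mul_div_of_mul_le_div (by positivity)
    (lt_of_le_of_ne (sum_nonneg fun k _ => abs_nonneg _) (Ne.symm huS)) (Nat.cast_nonneg _) hCS hQ

/-- lower bound on the compatibility factor via the thresholded Gram matrix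
(first part of Proposition 2).  The conclusion `κ²(ξ,S) ≥ c_*/2` is stated pointwise over
the cone `C(ξ,S)`, which is equivalent to the infimum formulation. -/
theorem compatibility_from_thresholded_gram
    (n p : ℕ) (hn : 0 < n)
    (X : Matrix (Fin n) (Fin p) ℝ)
    (ξ lam₁ s cstar : ℝ) (hξ : 0 < ξ) (hlam₁ : 0 < lam₁) (hs : 0 < s) (hcstar : 0 < cstar)
    (Sighat : Matrix (Fin p) (Fin p) ℝ)
    (hSighat : ∀ j k : Fin p, Sighat j k =
      if lam₁ ≤ |(∑ i, X i j * X i k) / n| then (∑ i, X i j * X i k) / n else 0)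
    (heig : ∀ u : Fin p → ℝ, cstar * (∑ j, (u j) ^ 2) ≤ ∑ j, ∑ k, u j * Sighat j k * u k)
    (hcond : s * lam₁ * (1 + ξ) ^ 2 ≤ cstar / 2)
    (S : Finset (Fin p)) (hS : S.Nonempty) (hScard : (S.card : ℝ) ≤ s)
    (u : Fin p → ℝ)
    (hcone : (∑ k ∈ Sᶜ, |u k|) ≤ ξ * ∑ k ∈ S, |u k|)
    (huS : (∑ k ∈ S, |u k|) ≠ 0) :
    cstar / 2 ≤ (∑ i, (∑ k, X i k * u k) ^ 2) * S.card / (n * (∑ k ∈ S, |u k|) ^ 2) :=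
  compatibility_from_thresholded_gram_general n p X ξ lam₁ s cstar hlam₁ hcstar Sighat hSighat heig
    hcond S hScard u hcone huS
end

section
/- Let β, β̂, ε̃, t̂ be real numbers, t̃ > 0 and c ≥ 0, and set β̃ = β + ε̃. Suppose |β̂ − β̃| + |t̂ − t̃| ≤ 2c t̃ and t̂ ≥ t̃ + |β̂ − β̃|. Then: (i) if β = 0 and |β̂| > t̂, then |ε̃| > t̃; and (ii) if |β| > (2 + 2c) t̃ and |β̂| ≤ t̂, then |ε̃| > t̃. (Consequently, when the LDPE estimates are uniformly close to a Gaussian sequence, hard-thresholding at t̂ selects all coefficients with |β_j| > (2+2c)t̃_j and no zero coefficients, provided each noise term satisfies |ε̃_j| ≤ t̃_j.) -/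
/-- thresholding a perturbed value selects no zero coefficient and every
coefficient larger than `(2+2c)t̃`. -/
theorem threshold_selection
    (β βhat εtil that ttil c : ℝ)
    (httil : 0 < ttil) (hc : 0 ≤ c)
    (βtil : ℝ) (hβtil : βtil = β + εtil)
    (h₁ : |βhat - βtil| + |that - ttil| ≤ 2 * c * ttil)
    (h₂ : ttil + |βhat - βtil| ≤ that) :
    (β = 0 → that < |βhat| → ttil < |εtil|) ∧
    ((2 + 2 * c) * ttil < |β| → |βhat| ≤ that → ttil < |εtil|) := by
  constructor
  · intro hb hlt
    have h3 : |βhat| - |εtil| ≤ |βhat - εtil| := abs_sub_abs_le_abs_sub _ _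
    have : βtil = εtil := by rw [hβtil, hb]; ring
    rw [this] at h₂
    linarith
  · intro hlt hle
    have h3 : |βtil| - |βhat| ≤ |βtil - βhat| := abs_sub_abs_le_abs_sub _ _
    have h4 : |βtil - βhat| = |βhat - βtil| := abs_sub_comm _ _
    have h5 : that ≤ ttil + |that - ttil| := by
      have := le_abs_self (that - ttil); linarith
    have h6 : |β| ≤ |βtil| + |εtil| := by
      rw [hβtil]
      have := abs_add_le (β + εtil) (-εtil)
      simpa using this
    linarith
end
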